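/- arXiv:quant-ph/0612072 — 9 statements merged into one kernel-verified Lean document; each statement's English description precedes it below -/
import Mathlib

section
/- If a_n, a'_n, b_n, b'_n are each equal to +1 or -1, then a_n(b_n + b'_n) + a'_n(b_n − b'_n) = ±2. Consequently, for any probability distribution over such quadruples, |E[ab] + E[ab'] + E[a'b] − E[a'b']| ≤ 2. -/
open MeasureTheory

lemma chsh_integrable {Ω : Type*} [MeasurableSpace Ω] (μ : Measure Ω) [IsProbabilityMeasure μ]
    (X Y : Ω → ℝ) (hX : Measurable X) (hY : Measurable Y)
    (hXv : ∀ ω, X ω = 1 ∨ X ω = -1) (hYv : ∀ ω, Y ω = 1 ∨ Y ω = -1) :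
    Integrable (fun ω => X ω * Y ω) μ := by
  apply Integrable.mono' (integrable_const (1 : ℝ)) ((hX.mul hY).aestronglyMeasurable)
  filter_upwards with ω
  rcases hXv ω with h1 | h1 <;> rcases hYv ω with h2 | h2 <;> simp [h1, h2]

/-- The CHSH inequality for local hidden-variable models: pointwise the CHSH
combination of `±1`-valued random variables is `±2`, and consequently the sum
of correlations is bounded by `2` in absolute value. -/
theorem chsh_inequality
    {Ω : Type*} [MeasurableSpace Ω] (μ : Measure Ω) [IsProbabilityMeasure μ]
    (A A' B B' : Ω → ℝ)
    (hA : Measurable A) (hA' : Measurable A') (hB : Measurable B) (hB' : Measurable B')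
    (hAv : ∀ ω, A ω = 1 ∨ A ω = -1) (hA'v : ∀ ω, A' ω = 1 ∨ A' ω = -1)
    (hBv : ∀ ω, B ω = 1 ∨ B ω = -1) (hB'v : ∀ ω, B' ω = 1 ∨ B' ω = -1) :
    (∀ ω, A ω * (B ω + B' ω) + A' ω * (B ω - B' ω) = 2 ∨
          A ω * (B ω + B' ω) + A' ω * (B ω - B' ω) = -2) ∧
    |(∫ ω, A ω * B ω ∂μ) + (∫ ω, A ω * B' ω ∂μ) +
      (∫ ω, A' ω * B ω ∂μ) - (∫ ω, A' ω * B' ω ∂μ)| ≤ 2 := by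
  have hpt : ∀ ω, A ω * (B ω + B' ω) + A' ω * (B ω - B' ω) = 2 ∨
          A ω * (B ω + B' ω) + A' ω * (B ω - B' ω) = -2 := by
    intro ω
    rcases hAv ω with h1 | h1 <;> rcases hA'v ω with h2 | h2 <;>
      rcases hBv ω with h3 | h3 <;> rcases hB'v ω with h4 | h4 <;>
      simp [h1, h2, h3, h4] <;> ring_nf <;> norm_num
  refine ⟨hpt, ?_⟩
  have i1 := chsh_integrable μ A B hA hB hAv hBv
  have i2 := chsh_integrable μ A B' hA hB' hAv hB'v
  have i3 := chsh_integrable μ A' B hA' hB hA'v hBv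
  have i4 := chsh_integrable μ A' B' hA' hB' hA'v hB'v
  have key : (∫ ω, A ω * B ω ∂μ) + (∫ ω, A ω * B' ω ∂μ) +
      (∫ ω, A' ω * B ω ∂μ) - (∫ ω, A' ω * B' ω ∂μ)
      = ∫ ω, (A ω * (B ω + B' ω) + A' ω * (B ω - B' ω)) ∂μ := by
    have : (fun ω => A ω * (B ω + B' ω) + A' ω * (B ω - B' ω))
        = fun ω => (A ω * B ω + A ω * B' ω) + (A' ω * B ω - A' ω * B' ω) :=
      funext fun ω => by ring
    have i12 : Integrable (fun ω => A ω * B ω + A ω * B' ω) μ := i1.add i2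
    have i34 : Integrable (fun ω => A' ω * B ω - A' ω * B' ω) μ := i3.sub i4
    rw [this, integral_add i12 i34, integral_add i1 i2, integral_sub i3 i4]
    ring
  rw [key]
  calc |∫ ω, (A ω * (B ω + B' ω) + A' ω * (B ω - B' ω)) ∂μ|
      ≤ ∫ ω, |A ω * (B ω + B' ω) + A' ω * (B ω - B' ω)| ∂μ := by simpa using norm_integral_le_integral_norm (fun ω => A ω * (B ω + B' ω) + A' ω * (B ω - B' ω))
    _ ≤ ∫ _ω, (2 : ℝ) ∂μ := by
        apply integral_mono_of_nonneg (by filter_upwards with ω; positivity)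
          (integrable_const 2)
        filter_upwards with ω
        rcases hpt ω with h | h <;> rw [h] <;> norm_num
    _ = 2 := by simp
end

section
/- A linear map Λ from d×d complex matrices to d'×d' complex matrices is positive (maps positive semidefinite matrices to positive semidefinite matrices) if and only if the associated Choi matrix W = (I ⊗ Λ)(P_+) satisfies ⟨x ⊗ y, W (x ⊗ y)⟩ ≥ 0 for all vectors x ∈ C^d, y ∈ C^{d'}. -/
/-! The quadratic form of the Choi matrix on `x ⊗ y` is, up to the factor `1/d`, the quadratic
form of `Λ (x̄ xᵀ)` at `y`. So the condition on product vectors says exactly that `Λ` maps every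
rank-one positive matrix to a positive one, and positive matrices are sums of rank-one ones. -/

open scoped BigOperators ComplexConjugate ComplexOrder

noncomputable section

/-- The Choi matrix `W = (I ⊗ Λ)(P₊)` of a linear map `Λ : M_d → M_{d'}`,
determined by `⟨k|Λ(|i⟩⟨j|)|l⟩ = d · ⟨i⊗k|W|j⊗l⟩`. -/
def choi {d d' : ℕ} (Λ : Matrix (Fin d) (Fin d) ℂ →ₗ[ℂ] Matrix (Fin d') (Fin d') ℂ) :
    Matrix (Fin d × Fin d') (Fin d × Fin d') ℂ :=
  fun p q => (1 / d : ℂ) * (Λ (Matrix.single p.1 q.1 1)) p.2 q.2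

open Matrix

theorem Matrix.posSemidef_iff_complex {n : Type*} [Fintype n] {M : Matrix n n ℂ} :
    M.PosSemidef ↔ ∀ x, 0 ≤ star x ⬝ᵥ (M *ᵥ x) := by
  classical
  refine ⟨fun hM => hM.dotProduct_mulVec_nonneg, fun hM => .of_dotProduct_mulVec_nonneg ?_ hM⟩
  rw [← isSymmetric_toEuclideanLin_iff, LinearMap.isSymmetric_iff_inner_map_self_real]
  intro x
  have hreal : conj (star x.ofLp ⬝ᵥ M *ᵥ x.ofLp) = star x.ofLp ⬝ᵥ M *ᵥ x.ofLp :=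
    Complex.conj_eq_iff_im.mpr (Complex.nonneg_iff.mp (hM x)).2.symm
  have hinner : star (M *ᵥ x.ofLp) ⬝ᵥ x.ofLp = star x.ofLp ⬝ᵥ M *ᵥ x.ofLp := by
    rw [← hreal, ← Complex.star_def, ← star_dotProduct_star, star_star]
  simp only [EuclideanSpace.inner_eq_star_dotProduct, Matrix.ofLp_toLpLin, Matrix.toLin'_apply]
  rw [dotProduct_comm, hinner, hreal]

theorem LinearMap.posSemidef_map_of_posSemidef_map_vecMulVec {𝕜 n m : Type*} [RCLike 𝕜]
    [Finite n] (Λ : Matrix n n 𝕜 →ₗ[𝕜] Matrix m m 𝕜)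
    (hΛ : ∀ v, (Λ (vecMulVec (star v) v)).PosSemidef) {A : Matrix n n 𝕜} (hA : A.PosSemidef) :
    (Λ A).PosSemidef := by
  obtain ⟨r, v, rfl⟩ := posSemidef_iff_eq_sum_vecMulVec.mp hA
  rw [map_sum]
  exact posSemidef_sum _ fun i _ => by simpa using hΛ (star (v i))

theorem LinearMap.map_vecMulVec_eq_sum {R m n : Type*} [CommSemiring R] [Fintype m]
    [DecidableEq m] (Λ : Matrix m m R →ₗ[R] Matrix n n R) (u v : m → R) :
    Λ (vecMulVec u v) = ∑ i, ∑ j, (u i * v j) • Λ (Matrix.single i j 1) := by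
  conv_lhs => rw [matrix_eq_sum_single (vecMulVec u v)]
  simp only [map_sum, vecMulVec_apply]
  refine Finset.sum_congr rfl fun i _ => Finset.sum_congr rfl fun j _ => ?_
  rw [← map_smul, smul_single, smul_eq_mul, mul_one]

theorem star_dotProduct_choi_mulVec_product {d d' : ℕ}
    (Λ : Matrix (Fin d) (Fin d) ℂ →ₗ[ℂ] Matrix (Fin d') (Fin d') ℂ) (x : Fin d → ℂ)
    (y : Fin d' → ℂ) :
    star (fun p : Fin d × Fin d' => x p.1 * y p.2) ⬝ᵥ (choi Λ *ᵥ fun p => x p.1 * y p.2)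
      = (1 / d : ℂ) * (star y ⬝ᵥ Λ (vecMulVec (star x) x) *ᵥ y) := by
  simp only [LinearMap.map_vecMulVec_eq_sum, dotProduct, mulVec, choi, Fintype.sum_prod_type,
    Matrix.sum_apply, Matrix.smul_apply, smul_eq_mul, Pi.star_apply, star_mul', Finset.mul_sum,
    Finset.sum_mul]
  rw [Finset.sum_comm]
  refine Finset.sum_congr rfl fun k _ => ?_
  rw [Finset.sum_comm_cycle]
  refine Finset.sum_congr rfl fun l _ => Finset.sum_congr rfl fun i _ =>
    Finset.sum_congr rfl fun j _ => ?_
  ring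

theorem positive_iff_choi_positive_on_products_general (d d' : ℕ) (hd : 0 < d)
    (Λ : Matrix (Fin d) (Fin d) ℂ →ₗ[ℂ] Matrix (Fin d') (Fin d') ℂ) :
    (∀ A : Matrix (Fin d) (Fin d) ℂ, A.PosSemidef → (Λ A).PosSemidef) ↔
    (∀ (x : Fin d → ℂ) (y : Fin d' → ℂ),
      0 ≤ dotProduct (star fun p : Fin d × Fin d' => x p.1 * y p.2)
            ((choi Λ).mulVec fun p => x p.1 * y p.2)) := by
  have hd_pos : (0 : ℂ) < d := by exact_mod_cast hd
  simp_rw [star_dotProduct_choi_mulVec_product]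
  constructor
  · intro hΛ x y
    exact mul_nonneg (by positivity)
      ((hΛ _ (posSemidef_vecMulVec_star_self x)).dotProduct_mulVec_nonneg y)
  · intro hW A
    refine LinearMap.posSemidef_map_of_posSemidef_map_vecMulVec Λ fun x => ?_
    refine posSemidef_iff_complex.mpr fun y => ?_
    have hscaled := mul_nonneg hd_pos.le (hW x y)
    rwa [← mul_assoc, mul_one_div_cancel hd_pos.ne', one_mul] at hscaled

/-- Jamiołkowski / de Pillis: a linear map is positive iff its Choi matrix is
nonnegative on all product vectors `x ⊗ y`. -/
theorem positive_iff_choi_positive_on_products (d d' : ℕ) (hd : 0 < d) (hd' : 0 < d')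
    (Λ : Matrix (Fin d) (Fin d) ℂ →ₗ[ℂ] Matrix (Fin d') (Fin d') ℂ) :
    (∀ A : Matrix (Fin d) (Fin d) ℂ, A.PosSemidef → (Λ A).PosSemidef) ↔
    (∀ (x : Fin d → ℂ) (y : Fin d' → ℂ),
      0 ≤ dotProduct (star fun p : Fin d × Fin d' => x p.1 * y p.2)
            ((choi Λ).mulVec fun p => x p.1 * y p.2)) :=
  positive_iff_choi_positive_on_products_general d d' hd Λ
end
end

section
/- If ρ is a fully separable r-party density matrix, then for every permutation σ of {1,…,2r}, the trace norm of the matrix Λ_σ(ρ) obtained by permuting the tensor indices of ρ according to σ satisfies ‖Λ_σ(ρ)‖₁ ≤ 1. -/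
open scoped BigOperators ComplexConjugate ComplexOrder
open Matrix

noncomputable section

/-- The trace norm (sum of singular values) of a complex matrix. -/
def traceNorm {n : Type*} [Fintype n] [DecidableEq n] (A : Matrix n n ℂ) : ℝ :=
  ∑ i, Real.sqrt ((Matrix.posSemidef_conjTranspose_mul_self A).1.eigenvalues i)

/-- An `r`-party state on `(ℂ^d)^{⊗r}` is fully separable if it is a convex
combination of tensor products of `r` pure one-party unit states. -/
def FullySeparable (r d : ℕ) (ρ : Matrix (Fin r → Fin d) (Fin r → Fin d) ℂ) : Prop :=
  ∃ (m : ℕ) (p : Fin m → ℝ) (φ : Fin m → Fin r → Fin d → ℂ),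
    (∀ t, 0 ≤ p t) ∧ (∑ t, p t = 1) ∧
    (∀ t w, ∑ i, ‖φ t w i‖ ^ 2 = 1) ∧
    ∀ x y, ρ x y = ∑ t, (p t : ℂ) * ∏ w, (φ t w (x w) * conj (φ t w (y w)))

/-- The map `Λ_σ` permuting the `2r` tensor indices of an `r`-party density
matrix according to `σ`.  Index `(w, false)` is the ket index of party `w`
and `(w, true)` the bra index. -/
def permuteIdx (r d : ℕ) (σ : Equiv.Perm (Fin r × Bool))
    (ρ : Matrix (Fin r → Fin d) (Fin r → Fin d) ℂ) :
    Matrix (Fin r → Fin d) (Fin r → Fin d) ℂ :=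
  fun x y =>
    ρ (fun w => (fun p : Fin r × Bool => if p.2 then y p.1 else x p.1) (σ (w, false)))
      (fun w => (fun p : Fin r × Bool => if p.2 then y p.1 else x p.1) (σ (w, true)))

/-!
For a product state `|φ⟩⟨φ|` every entry is a product of `2r` one-index factors, so `Λ_σ` only
permutes the factors and returns a rank-one matrix `|a⟩⟨b|` whose `a` and `b` are tensor products
of unit vectors. As `Λ_σ` is linear, it remains to bound the trace norm of `∑ₜ cₜ |uₜ⟩⟨vₜ|` by
`∑ₜ |cₜ| ‖uₜ‖ ‖vₜ‖`. With `f` an orthonormal eigenbasis of `AᴴA`, the vectors `A fᵢ` are orthogonal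
of norms the singular values, so `‖A‖₁ = ∑ᵢ ⟪eᵢ, A fᵢ⟫` for `eᵢ = A fᵢ / ‖A fᵢ‖`; expanding `A` and
applying Cauchy–Schwarz with Bessel's inequality for both `e` and `f` gives the bound.
-/

open scoped InnerProductSpace

section Bessel

variable {𝕜 E ι : Type*} [RCLike 𝕜] [NormedAddCommGroup E] [InnerProductSpace 𝕜 E] [Fintype ι]

theorem inner_inv_norm_smul_self (g : E) : ⟪(‖g‖⁻¹ : 𝕜) • g, g⟫_𝕜 = ‖g‖ := by
  rcases eq_or_ne g 0 with rfl | hg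
  · simp
  rw [inner_smul_left, inner_self_eq_norm_sq_to_K, RCLike.conj_inv, RCLike.conj_ofReal, sq,
    inv_mul_cancel_left₀ (by simpa using hg)]

theorem sum_norm_inner_inv_norm_smul_sq_le {g : ι → E}
    (hg : Pairwise fun i j => ⟪g i, g j⟫_𝕜 = 0) (z : E) :
    ∑ i, ‖⟪(‖g i‖⁻¹ : 𝕜) • g i, z⟫_𝕜‖ ^ 2 ≤ ‖z‖ ^ 2 := by
  classical
  have hS : Orthonormal 𝕜 fun i : {i // g i ≠ 0} => (‖g i‖⁻¹ : 𝕜) • g i := by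
    refine ⟨fun i => norm_smul_inv_norm i.2, fun i j hij => ?_⟩
    simp only [inner_smul_left, inner_smul_right, hg (Subtype.coe_injective.ne hij), mul_zero]
  calc ∑ i, ‖⟪(‖g i‖⁻¹ : 𝕜) • g i, z⟫_𝕜‖ ^ 2
      = ∑ i : {i // g i ≠ 0}, ‖⟪(‖g i‖⁻¹ : 𝕜) • g i, z⟫_𝕜‖ ^ 2 := by
        refine (Finset.sum_filter_of_ne fun i _ hi hgi => ?_).symm.trans
          (Finset.sum_subtype {i | g i ≠ 0} (fun i => by simp) _)
        simp [hgi] at hi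
    _ ≤ ‖z‖ ^ 2 := hS.sum_inner_products_le z

theorem sum_norm_inner_mul_norm_inner_le {e f : ι → E}
    (he : ∀ z, ∑ i, ‖⟪e i, z⟫_𝕜‖ ^ 2 ≤ ‖z‖ ^ 2) (hf : ∀ z, ∑ i, ‖⟪f i, z⟫_𝕜‖ ^ 2 ≤ ‖z‖ ^ 2)
    (x y : E) : ∑ i, ‖⟪e i, x⟫_𝕜‖ * ‖⟪f i, y⟫_𝕜‖ ≤ ‖x‖ * ‖y‖ := by
  have bound : ∀ {v : ι → E}, (∀ z, ∑ i, ‖⟪v i, z⟫_𝕜‖ ^ 2 ≤ ‖z‖ ^ 2) →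
      ∀ z, √(∑ i, ‖⟪v i, z⟫_𝕜‖ ^ 2) ≤ ‖z‖ := fun hv z =>
    Real.sqrt_le_iff.2 ⟨norm_nonneg z, hv z⟩
  calc ∑ i, ‖⟪e i, x⟫_𝕜‖ * ‖⟪f i, y⟫_𝕜‖
      ≤ √(∑ i, ‖⟪e i, x⟫_𝕜‖ ^ 2) * √(∑ i, ‖⟪f i, y⟫_𝕜‖ ^ 2) := Real.sum_mul_le_sqrt_mul_sqrt _ _ _
    _ ≤ ‖x‖ * ‖y‖ := mul_le_mul (bound he x) (bound hf y) (Real.sqrt_nonneg _) (norm_nonneg x)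

end Bessel

section TraceNorm

variable {n : Type*} [Fintype n] [DecidableEq n]

theorem inner_toEuclideanLin_eigenvectorBasis (A : Matrix n n ℂ) (hH : (Aᴴ * A).IsHermitian)
    (i j : n) :
    ⟪toEuclideanLin A (hH.eigenvectorBasis i), toEuclideanLin A (hH.eigenvectorBasis j)⟫_ℂ =
      hH.eigenvalues j * ⟪hH.eigenvectorBasis i, hH.eigenvectorBasis j⟫_ℂ := by
  rw [← LinearMap.adjoint_inner_right, ← toEuclideanLin_conjTranspose_eq_adjoint,
    ← LinearMap.comp_apply, ← toLpLin_mul_same, toLpLin_apply, hH.mulVec_eigenvectorBasis,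
    WithLp.toLp_smul, WithLp.toLp_ofLp, RCLike.real_smul_eq_coe_smul (K := ℂ), inner_smul_right]
  rfl

theorem traceNorm_eq_sum_norm_toEuclideanLin_eigenvectorBasis (A : Matrix n n ℂ) :
    traceNorm A = ∑ i, ‖toEuclideanLin A
      ((posSemidef_conjTranspose_mul_self A).1.eigenvectorBasis i)‖ := by
  refine Finset.sum_congr rfl fun i _ => ?_
  rw [norm_eq_sqrt_re_inner (𝕜 := ℂ), inner_toEuclideanLin_eigenvectorBasis,
    inner_self_eq_norm_sq_to_K, OrthonormalBasis.norm_eq_one]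
  simp

theorem inner_toEuclideanLin_vecMulVec (u v : n → ℂ) (x y : EuclideanSpace ℂ n) :
    ⟪x, toEuclideanLin (vecMulVec u v) y⟫_ℂ =
      ⟪x, WithLp.toLp 2 u⟫_ℂ * ⟪WithLp.toLp 2 (star v), y⟫_ℂ := by
  rw [toLpLin_apply, vecMulVec_mulVec, op_smul_eq_smul, WithLp.toLp_smul, inner_smul_right,
    mul_comm, EuclideanSpace.inner_eq_star_dotProduct (WithLp.toLp 2 (star v)), WithLp.ofLp_toLp,
    star_star, dotProduct_comm]

theorem traceNorm_sum_smul_vecMulVec_le {τ : Type*} [Fintype τ] (c : τ → ℂ) (u v : τ → n → ℂ) :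
    traceNorm (∑ t, c t • vecMulVec (u t) (v t)) ≤
      ∑ t, ‖c t‖ * (‖WithLp.toLp 2 (u t)‖ * ‖WithLp.toLp 2 (v t)‖) := by
  let A := ∑ t, c t • vecMulVec (u t) (v t)
  let f := (posSemidef_conjTranspose_mul_self A).1.eigenvectorBasis
  let g := fun i => toEuclideanLin A (f i)
  let e := fun i => (‖g i‖ : ℂ)⁻¹ • g i
  have hg : Pairwise fun i j => ⟪g i, g j⟫_ℂ = 0 := fun i j hij => by
    simp only [g]
    rw [inner_toEuclideanLin_eigenvectorBasis, f.orthonormal.2 hij, mul_zero]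
  have he := sum_norm_inner_inv_norm_smul_sq_le hg
  have hf := f.orthonormal.sum_inner_products_le (s := Finset.univ)
  have expand : ∀ i, ⟪e i, g i⟫_ℂ =
      ∑ t, c t * (⟪e i, WithLp.toLp 2 (u t)⟫_ℂ * ⟪WithLp.toLp 2 (star (v t)), f i⟫_ℂ) := by
    intro i
    simp only [g, A, map_sum, map_smul, LinearMap.sum_apply, LinearMap.smul_apply, inner_sum,
      inner_smul_right, inner_toEuclideanLin_vecMulVec]
  calc traceNorm A = ∑ i, ‖g i‖ := traceNorm_eq_sum_norm_toEuclideanLin_eigenvectorBasis A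
    _ = ∑ i, ‖⟪e i, g i⟫_ℂ‖ := Finset.sum_congr rfl fun i _ => by
      rw [show ⟪e i, g i⟫_ℂ = ‖g i‖ from inner_inv_norm_smul_self (g i), Complex.norm_real,
        norm_norm]
    _ ≤ ∑ i, ∑ t, ‖c t‖ * (‖⟪e i, WithLp.toLp 2 (u t)⟫_ℂ‖ *
          ‖⟪f i, WithLp.toLp 2 (star (v t))⟫_ℂ‖) := by
      refine Finset.sum_le_sum fun i _ => ?_
      rw [expand]
      refine (norm_sum_le _ _).trans_eq (Finset.sum_congr rfl fun t _ => ?_)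
      rw [norm_mul, norm_mul, norm_inner_symm (WithLp.toLp 2 (star (v t)))]
    _ = ∑ t, ‖c t‖ * ∑ i, ‖⟪e i, WithLp.toLp 2 (u t)⟫_ℂ‖ *
          ‖⟪f i, WithLp.toLp 2 (star (v t))⟫_ℂ‖ := by
      rw [Finset.sum_comm]
      simp only [Finset.mul_sum]
    _ ≤ ∑ t, ‖c t‖ * (‖WithLp.toLp 2 (u t)‖ * ‖WithLp.toLp 2 (star (v t))‖) := by
      gcongr with t
      exact sum_norm_inner_mul_norm_inner_le he hf _ _
    _ = ∑ t, ‖c t‖ * (‖WithLp.toLp 2 (u t)‖ * ‖WithLp.toLp 2 (v t)‖) := by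
      simp only [EuclideanSpace.norm_eq, Pi.star_apply, norm_star]

end TraceNorm

section ProductOperators

variable {ι κ : Type*} [Fintype ι]

def ketBraIndex (x y : ι → κ) : ι × Bool → κ := fun q => if q.2 then y q.1 else x q.1

def tensorVec (a : ι → κ → ℂ) : (ι → κ) → ℂ := fun x => ∏ w, a w (x w)

/-- `ψ (w, false)` is the ket factor and `ψ (w, true)` the (conjugated) bra factor of party `w`. -/
def productOp (ψ : ι × Bool → κ → ℂ) : Matrix (ι → κ) (ι → κ) ℂ :=
  fun x y => ∏ q, ψ q (ketBraIndex x y q)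

theorem productOp_eq_vecMulVec (ψ : ι × Bool → κ → ℂ) :
    productOp ψ = vecMulVec (tensorVec fun w => ψ (w, false)) (tensorVec fun w => ψ (w, true)) := by
  ext x y
  simp only [productOp, vecMulVec_apply, tensorVec, Fintype.prod_prod_type, Fintype.prod_bool,
    ketBraIndex, if_true, Bool.false_eq_true, if_false, Finset.prod_mul_distrib, mul_comm]

theorem norm_toLp_tensorVec [Fintype κ] [DecidableEq ι] (a : ι → κ → ℂ) :
    ‖WithLp.toLp 2 (tensorVec a)‖ = ∏ w, ‖WithLp.toLp 2 (a w)‖ := by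
  simp only [EuclideanSpace.norm_eq, tensorVec, norm_prod, Finset.prod_pow,
    ← Real.sqrt_prod _ fun w _ => Finset.sum_nonneg fun i _ => sq_nonneg ‖a w i‖, Fintype.prod_sum]

end ProductOperators

theorem permuteIdx_apply (r d : ℕ) (σ : Equiv.Perm (Fin r × Bool))
    (ρ : Matrix (Fin r → Fin d) (Fin r → Fin d) ℂ) (x y : Fin r → Fin d) :
    permuteIdx r d σ ρ x y =
      ρ (fun w => ketBraIndex x y (σ (w, false))) (fun w => ketBraIndex x y (σ (w, true))) :=
  rfl

theorem permuteIdx_productOp (r d : ℕ) (σ : Equiv.Perm (Fin r × Bool))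
    (ψ : Fin r × Bool → Fin d → ℂ) :
    permuteIdx r d σ (productOp ψ) = productOp (ψ ∘ σ.symm) := by
  ext x y
  have hidx : ketBraIndex (fun w => ketBraIndex x y (σ (w, false)))
      (fun w => ketBraIndex x y (σ (w, true))) = ketBraIndex x y ∘ σ := by
    funext ⟨w, b⟩
    cases b <;> rfl
  simp only [permuteIdx_apply, productOp, hidx, Function.comp_apply]
  rw [← Equiv.prod_comp σ fun q => ψ (σ.symm q) (ketBraIndex x y q)]
  simp

theorem permuteIdx_sum_smul (r d : ℕ) (σ : Equiv.Perm (Fin r × Bool)) {τ : Type*} [Fintype τ]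
    (c : τ → ℂ) (ρ : τ → Matrix (Fin r → Fin d) (Fin r → Fin d) ℂ) :
    permuteIdx r d σ (∑ t, c t • ρ t) = ∑ t, c t • permuteIdx r d σ (ρ t) := by
  ext x y
  simp [permuteIdx, Matrix.sum_apply]

theorem FullySeparable.exists_eq_sum_smul_productOp {r d : ℕ}
    {ρ : Matrix (Fin r → Fin d) (Fin r → Fin d) ℂ} (h : FullySeparable r d ρ) :
    ∃ (m : ℕ) (p : Fin m → ℝ) (ψ : Fin m → Fin r × Bool → Fin d → ℂ),
      (∀ t, 0 ≤ p t) ∧ ∑ t, p t = 1 ∧ (∀ t q, ‖WithLp.toLp 2 (ψ t q)‖ = 1) ∧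
      ρ = ∑ t, (p t : ℂ) • productOp (ψ t) := by
  obtain ⟨m, p, φ, hp, hp1, hφ, hρ⟩ := h
  refine ⟨m, p, fun t q => if q.2 then star (φ t q.1) else φ t q.1, hp, hp1, ?_, ?_⟩
  · rintro t ⟨w, _ | _⟩ <;> simp [EuclideanSpace.norm_eq, hφ]
  · ext x y
    simp [hρ, Matrix.sum_apply, productOp_eq_vecMulVec, vecMulVec_apply, tensorVec,
      Finset.prod_mul_distrib]

/-- The permutation separability criteria: for a fully separable state `ρ`
and any permutation `σ` of the `2r` tensor indices, `‖Λ_σ(ρ)‖₁ ≤ 1`. -/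
theorem permutation_criterion (r d : ℕ)
    (ρ : Matrix (Fin r → Fin d) (Fin r → Fin d) ℂ)
    (hsep : FullySeparable r d ρ) (σ : Equiv.Perm (Fin r × Bool)) :
    traceNorm (permuteIdx r d σ ρ) ≤ 1 := by
  obtain ⟨m, p, ψ, hp, hp1, hψ, rfl⟩ := hsep.exists_eq_sum_smul_productOp
  simp_rw [permuteIdx_sum_smul, permuteIdx_productOp, productOp_eq_vecMulVec]
  refine (traceNorm_sum_smul_vecMulVec_le _ _ _).trans_eq ?_
  simp only [norm_toLp_tensorVec, Function.comp_apply, hψ, Finset.prod_const_one, mul_one,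
    Complex.norm_real, Real.norm_of_nonneg (hp _), hp1]
end
end

section
/- The number of orbits of the action of Z = {e, τ} (where τ = (1,2)(3,4)⋯(2r−1,2r) is the global transposition) on the right cosets S_{2r}/T of the norm-preserving subgroup T equals (1/4)[C(2r, r) + 2^r + C(r, r/2)·[r even]], where C(n,k) denotes the binomial coefficient and [r even] is 1 if r is even and 0 otherwise. -/
noncomputable section

/-- The global transposition `τ = (1,2)(3,4)⋯(2r−1,2r)`: positions are indexed
by `Fin r × Bool`, with `(k, false)` the ket index `2k−1` and `(k, true)` the
bra index `2k` of party `k`; `τ` flips each ket/bra pair. -/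
def tau (r : ℕ) : Equiv.Perm (Fin r × Bool) :=
  Equiv.prodCongr (Equiv.refl (Fin r)) (Equiv.swap false true)

/-- The subgroup `T` of norm-preserving permutations: generated by all
transpositions `(2k, 2l)` of bra indices, `(2k−1, 2l−1)` of ket indices,
together with the global transposition `τ`. -/
def normPresSubgroup (r : ℕ) : Subgroup (Equiv.Perm (Fin r × Bool)) :=
  Subgroup.closure
    ({tau r} ∪ {σ | ∃ k l : Fin r,
        σ = Equiv.swap (k, false) (l, false) ∨ σ = Equiv.swap (k, true) (l, true)})

/-! A coset `σT` is determined by the unordered bipartition `{σK, σKᶜ}` of the `2r` positions,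
`K` the ket positions: `T` is exactly the stabilizer of `{K, Kᶜ}`, because the swaps inside the
ket and inside the bra positions generate every permutation preserving `K`, and `τ` exchanges
`K` and `Kᶜ`. So we count orbits of `τ` on balanced unordered bipartitions, and Burnside's lemma
for a group of order two gives `2 · #orbits = #bipartitions + #τ-fixed bipartitions`. Passing to
ordered blocks `B` doubles both terms once more: there are `C(2r, r)` blocks, and `{B, Bᶜ}` is
`τ`-fixed iff `τB = B` (`B` is a union of ket/bra pairs: `C(r, r/2)` choices if `r` is even, none
otherwise) or `τB = Bᶜ` (`B` picks one index of each pair: `2^r` choices). -/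

open Equiv Finset MulAction
open scoped Pointwise

theorem Finset.smul_finset_compl {G α : Type*} [Group G] [MulAction G α] [DecidableEq α]
    [Fintype α] (g : G) (s : Finset α) : g • sᶜ = (g • s)ᶜ := by
  simp only [compl_eq_univ_sdiff, smul_finset_sdiff, smul_finset_univ]

theorem Finset.two_mul_card_of_smul_finset_eq_compl {G α : Type*} [Group G] [MulAction G α]
    [DecidableEq α] [Fintype α] {g : G} {s : Finset α} (h : g • s = sᶜ) :
    2 * #s = Fintype.card α := by
  have := card_compl_add_card s
  rw [← h, card_smul_finset] at this
  omega

theorem Finset.card_filter_two_mul_card_eq (ι : Type*) [Fintype ι] [DecidableEq ι] :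
    #{s : Finset ι | 2 * #s = Fintype.card ι} =
      if Even (Fintype.card ι) then (Fintype.card ι).choose (Fintype.card ι / 2) else 0 := by
  split_ifs with h
  · obtain ⟨m, hm⟩ := h
    rw [show Fintype.card ι / 2 = m by omega, ← card_univ, ← card_powersetCard,
      ← univ_filter_card_eq, card_univ]
    exact congrArg card (filter_congr fun s _ => by omega)
  · rw [card_eq_zero, filter_eq_empty_iff]
    exact fun s _ hs => h ⟨#s, by omega⟩

theorem Finset.card_filter_smul_eq_self_or_compl {G α : Type*} [Group G] [MulAction G α]
    [DecidableEq α] [Fintype α] [Nonempty α] (g : G) :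
    #{A : Finset α | 2 * #A = Fintype.card α ∧ (g • A = A ∨ g • A = Aᶜ)} =
      #{A : Finset α | 2 * #A = Fintype.card α ∧ g • A = A} + #{A : Finset α | g • A = Aᶜ} := by
  rw [← card_union_of_disjoint, ← filter_or]
  · refine congrArg card (filter_congr fun A _ => ⟨by tauto, ?_⟩)
    rintro (h | h)
    · exact ⟨h.1, .inl h.2⟩
    · exact ⟨two_mul_card_of_smul_finset_eq_compl h, .inr h⟩
  · exact disjoint_filter.2 fun A _ h1 h2 => ne_compl_self (h1.2.symm.trans h2)

namespace MulAction

variable {G X Y : Type*} [Group G] [MulAction G X] [MulAction G Y]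

theorem card_orbitRel_quotient_eq_of_bijective {f : X → Y} (hf : Function.Bijective f)
    (hsmul : ∀ (g : G) x, f (g • x) = g • f x) :
    Nat.card (orbitRel.Quotient G X) = Nat.card (orbitRel.Quotient G Y) := by
  refine Nat.card_congr (Quotient.congr (Equiv.ofBijective f hf) fun a b => ?_)
  simp only [orbitRel_apply, mem_orbit_iff, Equiv.ofBijective_apply, ← hsmul, hf.injective.eq_iff]

theorem card_orbitRel_quotient_quotient_stabilizer [IsPretransitive G Y] (H : Subgroup G)
    (y : Y) :
    Nat.card (orbitRel.Quotient H (G ⧸ stabilizer G y)) = Nat.card (orbitRel.Quotient H Y) := by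
  refine card_orbitRel_quotient_eq_of_bijective (f := ofQuotientStabilizer G y)
    ⟨injective_ofQuotientStabilizer G y, fun x => ?_⟩ fun h q => ofQuotientStabilizer_smul G y h q
  obtain ⟨g, rfl⟩ := exists_smul_eq G y x
  exact ⟨g, rfl⟩

theorem two_mul_card_orbitRel_quotient_zpowers [Finite X] {g : G} (hg : orderOf g = 2) :
    2 * Nat.card (orbitRel.Quotient (Subgroup.zpowers g) X) =
      Nat.card X + Nat.card (fixedBy X g) := by
  classical
  have : Finite (Subgroup.zpowers g) := (orderOf_pos_iff.mp (by omega)).finite_zpowers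
  have : Fintype (Subgroup.zpowers g) := Fintype.ofFinite _
  have : Fintype (orbitRel.Quotient (Subgroup.zpowers g) X) := Fintype.ofFinite _
  have : ∀ z : Subgroup.zpowers g, Fintype (fixedBy X z) := fun _ => Fintype.ofFinite _
  have hcard : Fintype.card (Subgroup.zpowers g) = 2 := by
    rw [← Nat.card_eq_fintype_card, Nat.card_zpowers, hg]
  have hne : (1 : Subgroup.zpowers g) ≠ ⟨g, Subgroup.mem_zpowers g⟩ := by
    intro h
    rw [show g = 1 from (congrArg Subtype.val h).symm, orderOf_one] at hg
    omega
  have huniv : (univ : Finset (Subgroup.zpowers g)) = {1, ⟨g, Subgroup.mem_zpowers g⟩} :=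
    (eq_univ_of_card _ (by rw [card_pair hne, hcard])).symm
  have burnside := sum_card_fixedBy_eq_card_orbits_mul_card_group (Subgroup.zpowers g) X
  rw [huniv, sum_pair hne, hcard] at burnside
  simp only [← Nat.card_eq_fintype_card, fixedBy_one_eq_univ, Nat.card_univ] at burnside
  rw [mul_comm, ← burnside]
  rfl

end MulAction

theorem Equiv.Perm.mem_closure_swap_fiber {ι β : Type*} [DecidableEq ι] [DecidableEq β]
    [Finite ι] [Finite β] {σ : Perm (ι × β)} (hσ : ∀ x, (σ x).2 = x.2) :
    σ ∈ Subgroup.closure {π | ∃ i j b, π = swap (i, b) (j, b)} := by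
  let S : Set (Perm (ι × β)) := {π | ∃ i j b, i ≠ j ∧ π = swap (i, b) (j, b)}
  have hS : ∀ π ∈ S, π.IsSwap := by
    rintro _ ⟨i, j, b, hij, rfl⟩
    exact ⟨(i, b), (j, b), by simpa, rfl⟩
  have hsub : S ⊆ {π | ∃ i j b, π = swap (i, b) (j, b)} := fun _ ⟨i, j, b, _, h⟩ => ⟨i, j, b, h⟩
  refine Subgroup.closure_mono hsub ((mem_closure_isSwap hS).2 ⟨Set.toFinite _, fun x => ?_⟩)
  obtain ⟨i, b⟩ := x
  obtain ⟨j, hj⟩ : ∃ j, σ (i, b) = (j, b) := ⟨(σ (i, b)).1, Prod.ext rfl (hσ _)⟩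
  rw [hj]
  obtain rfl | hij := eq_or_ne i j
  · exact mem_orbit_self _
  · exact ⟨⟨swap (i, b) (j, b), Subgroup.subset_closure ⟨i, j, b, hij, rfl⟩⟩, swap_apply_left _ _⟩

/-- An unordered bipartition `{A, Aᶜ}` of `α`, represented by its block containing `a`. -/
@[ext]
structure Bipartition {α : Type*} (a : α) where
  block : Finset α
  mem_block : a ∈ block

namespace Bipartition

variable {α : Type*} [DecidableEq α] [Fintype α] {G : Type*} [Group G] [MulAction G α] {a : α}

instance : Finite (Bipartition a) :=
  Finite.of_injective block fun _ _ => Bipartition.ext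

variable (a) in
def ofBlock (A : Finset α) : Bipartition a :=
  if h : a ∈ A then ⟨A, h⟩ else ⟨Aᶜ, mem_compl.2 h⟩

theorem block_ofBlock_of_mem {A : Finset α} (h : a ∈ A) : (ofBlock a A).block = A := by
  simp [ofBlock, h]

theorem block_ofBlock_of_notMem {A : Finset α} (h : a ∉ A) : (ofBlock a A).block = Aᶜ := by
  simp [ofBlock, h]

theorem ofBlock_compl (A : Finset α) : ofBlock a Aᶜ = ofBlock a A := by
  ext1
  by_cases h : a ∈ A
  · rw [block_ofBlock_of_notMem (by simpa), block_ofBlock_of_mem h, compl_compl]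
  · rw [block_ofBlock_of_mem (by simpa), block_ofBlock_of_notMem h]

theorem ofBlock_eq_iff {A : Finset α} {B : Bipartition a} :
    ofBlock a A = B ↔ A = B.block ∨ A = B.blockᶜ := by
  rw [Bipartition.ext_iff]
  by_cases h : a ∈ A
  · rw [block_ofBlock_of_mem h, iff_self_or]
    rintro rfl
    exact absurd B.mem_block (mem_compl.1 h)
  · rw [block_ofBlock_of_notMem h, compl_eq_comm, eq_comm (b := A), iff_or_self]
    rintro rfl
    exact absurd B.mem_block h

theorem ofBlock_block (A : Bipartition a) : ofBlock a A.block = A :=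
  ofBlock_eq_iff.2 (Or.inl rfl)

instance : SMul G (Bipartition a) where
  smul g A := ofBlock a (g • A.block)

theorem smul_def (g : G) (A : Bipartition a) : g • A = ofBlock a (g • A.block) := rfl

instance : MulAction G (Bipartition a) where
  one_smul A := by rw [smul_def, one_smul, ofBlock_block]
  mul_smul g h A := by
    rw [smul_def, smul_def, smul_def, mul_smul]
    generalize hB : ofBlock a (h • A.block) = B
    obtain e | e := ofBlock_eq_iff.1 hB
    · rw [e]
    · rw [e, smul_finset_compl, ofBlock_compl]

theorem smul_eq_self_iff {g : G} {A : Bipartition a} :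
    g • A = A ↔ g • A.block = A.block ∨ g • A.block = A.blockᶜ :=
  ofBlock_eq_iff

theorem two_mul_card_ofBlock {A : Finset α} (hA : 2 * #A = Fintype.card α) :
    2 * #(ofBlock a A).block = Fintype.card α := by
  by_cases h : a ∈ A
  · rwa [block_ofBlock_of_mem h]
  · rw [block_ofBlock_of_notMem h, card_compl]
    omega

variable (G a) in
def balanced : SubMulAction G (Bipartition a) where
  carrier := {A | 2 * #A.block = Fintype.card α}
  smul_mem' g A hA := two_mul_card_ofBlock (by rwa [card_smul_finset])

theorem exists_perm_smul_eq {A B : Bipartition a} (h : #A.block = #B.block) :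
    ∃ σ : Perm α, σ • A = B := by
  have := Set.powersetCard.isPretransitive (α := α) (n := #B.block)
  obtain ⟨σ, hσ⟩ := exists_smul_eq (Perm α)
    (⟨A.block, h⟩ : Set.powersetCard α #B.block) ⟨B.block, rfl⟩
  refine ⟨σ, ?_⟩
  rw [smul_def, ← ofBlock_block B]
  exact congrArg (ofBlock a ∘ Subtype.val) hσ

theorem two_mul_card_subtype (P : Finset α → Prop) [DecidablePred P]
    (hP : ∀ A, P Aᶜ ↔ P A) : 2 * Nat.card {A : Bipartition a // P A.block} = #{A | P A} := by
  have hsplit := card_filter_add_card_filter_not (s := {A | P A}) (a ∈ ·)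
  have hcompl : #{A ∈ {A | P A} | a ∉ A} = #{A ∈ {A | P A} | a ∈ A} := by
    refine card_nbij' compl compl ?_ ?_ (fun A _ => compl_compl A) (fun A _ => compl_compl A) <;>
      intro A <;> simp [hP]
  have hpoint : Nat.card {A : Bipartition a // P A.block} = #{A ∈ {A | P A} | a ∈ A} := by
    rw [filter_filter, ← Fintype.card_subtype, ← Nat.card_eq_fintype_card]
    exact Nat.card_congr
      ⟨fun A => ⟨A.1.1, A.2, A.1.2⟩, fun A => ⟨⟨A.1, A.2.2⟩, A.2.1⟩, fun _ => rfl, fun _ => rfl⟩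
  omega

instance : IsPretransitive (Perm α) (balanced (Perm α) a) where
  exists_smul_eq A B := by
    obtain ⟨σ, hσ⟩ := exists_perm_smul_eq (A := A.1) (B := B.1) (by
      have hA : 2 * #A.1.block = _ := A.2
      have hB : 2 * #B.1.block = _ := B.2
      omega)
    exact ⟨σ, Subtype.ext hσ⟩

theorem two_mul_card_balanced :
    2 * Nat.card (balanced G a) = #{A : Finset α | 2 * #A = Fintype.card α} :=
  two_mul_card_subtype (fun A => 2 * #A = Fintype.card α) fun A => by
    have := card_compl_add_card A
    omega

theorem two_mul_card_fixedBy_balanced (g : G) :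
    2 * Nat.card (fixedBy (balanced G a) g) =
      #{A : Finset α | 2 * #A = Fintype.card α ∧ (g • A = A ∨ g • A = Aᶜ)} := by
  rw [← two_mul_card_subtype]
  · congr 1
    refine Nat.card_congr (((Equiv.subtypeEquivRight fun A => ?_).trans
      (Equiv.subtypeSubtypeEquivSubtypeInter (· ∈ balanced G a) fun A => g • A = A)).trans
      (Equiv.subtypeEquivRight fun A => and_congr_right fun _ => smul_eq_self_iff))
    rw [mem_fixedBy, Subtype.ext_iff, SubMulAction.val_smul]
  · intro A
    have := card_compl_add_card A
    rw [smul_finset_compl, compl_inj_iff, compl_inj_iff, or_comm]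
    refine and_congr_left fun _ => ?_
    omega

end Bipartition

section GlobalTransposition

variable {r : ℕ}

theorem tau_apply (x : Fin r × Bool) : tau r x = (x.1, !x.2) := by
  obtain ⟨k, _ | _⟩ := x <;> rfl

theorem tau_mul_self : tau r * tau r = 1 := by
  ext x <;> simp [tau_apply]

theorem mem_tau_smul {B : Finset (Fin r × Bool)} {x : Fin r × Bool} :
    x ∈ tau r • B ↔ (x.1, !x.2) ∈ B := by
  rw [← inv_smul_mem_iff, inv_eq_of_mul_eq_one_right tau_mul_self, Perm.smul_def, tau_apply]

theorem orderOf_tau [NeZero r] : orderOf (tau r) = 2 := by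
  refine orderOf_eq_prime (by rw [sq, tau_mul_self]) fun h => ?_
  simpa [tau_apply] using congrArg (fun σ : Perm (Fin r × Bool) => (σ (0, false)).2) h

theorem card_filter_tau_smul_eq_compl :
    #{B : Finset (Fin r × Bool) | tau r • B = Bᶜ} = 2 ^ r := by
  calc _ = #(univ : Finset (Finset (Fin r))) := by
        refine card_nbij' (fun B => ({k | (k, false) ∈ B} : Finset (Fin r)))
          (fun D => ({x | x.1 ∈ D ↔ x.2 = false} : Finset (Fin r × Bool)))
          (fun _ _ => mem_coe.2 (mem_univ _)) (fun D _ => ?_) (fun B hB => ?_) (fun D _ => ?_)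
        · refine mem_coe.2 (mem_filter.2 ⟨mem_univ _, ?_⟩)
          ext ⟨k, b⟩
          cases b <;> simp [mem_tau_smul]
        · have hB : tau r • B = Bᶜ := (mem_filter.1 hB).2
          ext ⟨k, b⟩
          have := congrArg ((k, true) ∈ ·) hB
          simp only [mem_tau_smul, mem_compl, Bool.not_true, eq_iff_iff] at this
          cases b <;> simp [this]
        · ext
          simp
    _ = 2 ^ r := by simp

theorem eq_product_of_tau_smul_eq_self {B : Finset (Fin r × Bool)} (h : tau r • B = B) :
    B = ({k | (k, false) ∈ B} : Finset (Fin r)) ×ˢ univ := by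
  ext ⟨k, b⟩
  have := congrArg ((k, true) ∈ ·) h
  simp only [mem_tau_smul, Bool.not_true, eq_iff_iff] at this
  cases b <;> simp [this]

theorem card_filter_tau_smul_eq_self :
    #{B : Finset (Fin r × Bool) | 2 * #B = Fintype.card (Fin r × Bool) ∧ tau r • B = B} =
      #{D : Finset (Fin r) | 2 * #D = Fintype.card (Fin r)} := by
  refine card_nbij' (fun B => ({k | (k, false) ∈ B} : Finset (Fin r))) (fun D => D ×ˢ univ)
    (fun B hB => ?_) (fun D hD => ?_) (fun B hB => ?_) (fun D _ => ?_)
  · obtain ⟨hcard, hB⟩ := (mem_filter.1 hB).2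
    rw [eq_product_of_tau_smul_eq_self hB, card_product] at hcard
    simp only [card_univ, Fintype.card_bool, Fintype.card_prod, Fintype.card_fin] at hcard
    simp only [coe_filter, mem_univ, true_and, Set.mem_ofPred_eq, Fintype.card_fin]
    omega
  · simp only [coe_filter, mem_univ, true_and, Set.mem_ofPred_eq, Fintype.card_fin] at hD ⊢
    refine ⟨?_, ?_⟩
    · simp only [card_product, card_univ, Fintype.card_bool, Fintype.card_prod, Fintype.card_fin]
      omega
    · ext ⟨k, b⟩
      simp [mem_tau_smul]
  · exact (eq_product_of_tau_smul_eq_self (mem_filter.1 hB).2.2).symm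
  · ext
    simp

end GlobalTransposition

section Ket

variable {r : ℕ}

variable (r) in
def ketBlock : Finset (Fin r × Bool) := univ ×ˢ {false}

theorem smul_ketBlock_eq_self_iff {σ : Perm (Fin r × Bool)} :
    σ • ketBlock r = ketBlock r ↔ ∀ x, (σ x).2 = x.2 := by
  constructor
  · intro h x
    have := smul_mem_smul_finset_iff σ (b := x) (s := ketBlock r)
    rw [h] at this
    simp only [ketBlock, mem_product, mem_univ, mem_singleton, true_and, Perm.smul_def] at this
    cases hx : x.2 <;> cases hσx : (σ x).2 <;> simp_all
  · intro h
    ext y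
    rw [← inv_smul_mem_iff]
    simp only [ketBlock, mem_product, mem_univ, mem_singleton, true_and, Perm.smul_def]
    rw [← h (σ⁻¹ y)]
    simp

theorem tau_smul_ketBlock : tau r • ketBlock r = (ketBlock r)ᶜ := by
  ext ⟨k, b⟩
  cases b <;> simp [ketBlock, mem_tau_smul]

variable (r) in
def ket [NeZero r] : Bipartition.balanced (Perm (Fin r × Bool)) ((0 : Fin r), false) :=
  ⟨⟨ketBlock r, by simp [ketBlock]⟩, by
    change 2 * #(ketBlock r) = _
    simp [ketBlock, mul_comm]⟩

theorem normPresSubgroup_eq_stabilizer [NeZero r] :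
    normPresSubgroup r = stabilizer (Perm (Fin r × Bool)) (ket r) := by
  have htau : tau r ∈ normPresSubgroup r := Subgroup.subset_closure (Or.inl rfl)
  have hfiber (σ : Perm (Fin r × Bool)) (hσ : σ • ketBlock r = ketBlock r) :
      σ ∈ normPresSubgroup r := by
    refine (Subgroup.closure_le _).2 ?_
      (Perm.mem_closure_swap_fiber (smul_ketBlock_eq_self_iff.1 hσ))
    rintro _ ⟨k, l, b, rfl⟩
    exact Subgroup.subset_closure (Or.inr ⟨k, l, by cases b <;> simp⟩)
  rw [SubMulAction.stabilizer_of_subMul]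
  refine le_antisymm ((Subgroup.closure_le _).2 ?_) fun σ hσ => ?_
  · rintro σ (rfl | ⟨k, l, rfl | rfl⟩) <;>
      rw [SetLike.mem_coe, mem_stabilizer_iff, Bipartition.smul_eq_self_iff]
    · exact Or.inr tau_smul_ketBlock
    all_goals exact Or.inl (smul_ketBlock_eq_self_iff.2 fun x => by
      rw [swap_apply_def]; split_ifs <;> simp_all)
  · obtain h | h := Bipartition.smul_eq_self_iff.1 (mem_stabilizer_iff.1 hσ)
    · exact hfiber σ h
    · change σ • ketBlock r = (ketBlock r)ᶜ at h
      have : tau r * σ ∈ normPresSubgroup r := hfiber _ (by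
        rw [mul_smul, h, smul_finset_compl, tau_smul_ketBlock, compl_compl])
      simpa [← mul_assoc, tau_mul_self] using mul_mem htau this

end Ket

/-- The number of orbits of `Z = {e, τ}` acting by left multiplication on the
cosets `S_{2r}/T` equals `(1/4)[C(2r,r) + 2^r + C(r, r/2)·[r even]]`. -/
theorem count_independent_permutation_criteria (r : ℕ) (hr : 0 < r) :
    4 * Nat.card (MulAction.orbitRel.Quotient
        (Subgroup.zpowers (tau r))
        (Equiv.Perm (Fin r × Bool) ⧸ normPresSubgroup r))
      = Nat.choose (2 * r) r + 2 ^ r +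
        (if Even r then Nat.choose r (r / 2) else 0) := by
  have : NeZero r := ⟨hr.ne'⟩
  rw [normPresSubgroup_eq_stabilizer, card_orbitRel_quotient_quotient_stabilizer]
  have burnside := two_mul_card_orbitRel_quotient_zpowers
    (X := Bipartition.balanced (Perm (Fin r × Bool)) ((0 : Fin r), false)) (orderOf_tau (r := r))
  have hcard :=
    Bipartition.two_mul_card_balanced (G := Perm (Fin r × Bool)) (a := ((0 : Fin r), false))
  have hfix := Bipartition.two_mul_card_fixedBy_balanced (a := ((0 : Fin r), false)) (tau r)
  rw [card_filter_smul_eq_self_or_compl, card_filter_tau_smul_eq_self,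
    card_filter_tau_smul_eq_compl, card_filter_two_mul_card_eq] at hfix
  have hα : Fintype.card (Fin r × Bool) = 2 * r := by simp [mul_comm]
  rw [card_filter_two_mul_card_eq, hα, if_pos (even_two_mul r),
    Nat.mul_div_cancel_left r two_pos] at hcard
  rw [Fintype.card_fin] at hfix
  omega
end
end

section
/- For any unit vector ψ = Σ_{i=1}^{k} λ_i (a_i ⊗ b_i) of Schmidt rank at most k in C^d ⊗ C^d (with λ_i ≥ 0, Σ λ_i² = 1, orthonormal a_i and b_i, k ≤ d), the fully entangled fraction satisfies max over maximally entangled Φ of |⟨Φ, ψ⟩|² = (1/d)(Σ_{i=1}^{k} λ_i)² ≤ k/d. -/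
/-!
Write `ψ = ∑ⱼ λⱼ aⱼ ⊗ bⱼ`. Up to the factor `1/√d`, the overlap of `ψ` with `(U ⊗ V)ψ₊` is
`∑ⱼ λⱼ ∑ᵢ (Uᴴaⱼ)ᵢ (Vᴴbⱼ)ᵢ`. By Cauchy–Schwarz each inner sum has modulus at most
`‖Uᴴaⱼ‖ ‖Vᴴbⱼ‖ = 1`, which bounds the fraction by `(∑ λⱼ)²/d`. Equality holds when the columns
of `U` and `V` are orthonormal bases extending `(aⱼ)` and `(bⱼ)`, for then `Uᴴaⱼ = Vᴴbⱼ = eⱼ`.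
Finally `(∑ λⱼ)² ≤ k ∑ λⱼ² = k`.
-/

open scoped ComplexConjugate

open Matrix Module

theorem Orthonormal.exists_orthonormalBasis_extension_of_embedding {𝕜 E ι κ : Type*} [RCLike 𝕜]
    [NormedAddCommGroup E] [InnerProductSpace 𝕜 E] [FiniteDimensional 𝕜 E] [Fintype ι]
    (card_ι : finrank 𝕜 E = Fintype.card ι) {a : κ → E} (ha : Orthonormal 𝕜 a) (e : κ ↪ ι) :
    ∃ u : OrthonormalBasis ι 𝕜 E, ∀ j, u (e j) = a j := by
  set v : ι → E := Function.extend e a 0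
  have hv : ∀ j, v (e j) = a j := e.injective.extend_apply a 0
  have hrestrict : (Set.range e).domRestrict v = a ∘ (Equiv.ofInjective e e.injective).symm := by
    ext ⟨_, j, rfl⟩
    simp only [Function.comp_apply, Equiv.ofInjective_symm_apply]
    exact hv j
  obtain ⟨u, hu⟩ := Orthonormal.exists_orthonormalBasis_extension_of_card_eq card_ι
    (s := Set.range e) (hrestrict ▸ ha.comp _ (Equiv.injective _))
  exact ⟨u, fun j => (hu _ ⟨j, rfl⟩).trans (hv j)⟩

section
variable {𝕜 ι : Type*} [RCLike 𝕜] [Fintype ι]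

theorem EuclideanSpace.norm_sum_mul_le (x y : EuclideanSpace 𝕜 ι) :
    ‖∑ i, x i * y i‖ ≤ ‖x‖ * ‖y‖ :=
  calc ‖∑ i, x i * y i‖ ≤ ∑ i, ‖x i‖ * ‖y i‖ := by
        simpa only [norm_mul] using norm_sum_le _ fun i => x i * y i
    _ ≤ √(∑ i, ‖x i‖ ^ 2) * √(∑ i, ‖y i‖ ^ 2) := Real.sum_mul_le_sqrt_mul_sqrt _ _ _
    _ = ‖x‖ * ‖y‖ := by rw [EuclideanSpace.norm_eq, EuclideanSpace.norm_eq]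

variable [DecidableEq ι]

theorem Matrix.norm_toEuclideanCLM_conjTranspose_apply {U : Matrix ι ι 𝕜}
    (hU : U ∈ unitaryGroup ι 𝕜) (x : EuclideanSpace 𝕜 ι) :
    ‖toEuclideanCLM (𝕜 := 𝕜) Uᴴ x‖ = ‖x‖ :=
  ContinuousLinearMap.norm_map_of_mem_unitary
    (Unitary.map_mem toEuclideanCLM (Unitary.star_mem hU)) x

theorem OrthonormalBasis.toEuclideanCLM_conjTranspose_toMatrix_apply
    (u : OrthonormalBasis ι 𝕜 (EuclideanSpace 𝕜 ι)) (x : EuclideanSpace 𝕜 ι) :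
    toEuclideanCLM (𝕜 := 𝕜) ((EuclideanSpace.basisFun ι 𝕜).toBasis.toMatrix u)ᴴ x = u.repr x := by
  ext i
  simp [mulVec, dotProduct, Basis.toMatrix_apply, OrthonormalBasis.repr_apply_apply,
    PiLp.inner_apply, mul_comm]

theorem OrthonormalBasis.sum_toEuclideanCLM_conjTranspose_toMatrix_self
    (u w : OrthonormalBasis ι 𝕜 (EuclideanSpace 𝕜 ι)) (c : ι) :
    ∑ i, toEuclideanCLM (𝕜 := 𝕜) ((EuclideanSpace.basisFun ι 𝕜).toBasis.toMatrix u)ᴴ (u c) i *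
      toEuclideanCLM (𝕜 := 𝕜) ((EuclideanSpace.basisFun ι 𝕜).toBasis.toMatrix w)ᴴ (w c) i = 1 := by
  simp [toEuclideanCLM_conjTranspose_toMatrix_apply]

theorem Matrix.sum_conj_sum_mul_tmul (U V : Matrix ι ι 𝕜) (a b : EuclideanSpace 𝕜 ι) :
    ∑ p : ι × ι, conj (∑ i, U p.1 i * V p.2 i) * (a p.1 * b p.2) =
      ∑ i, toEuclideanCLM (𝕜 := 𝕜) Uᴴ a i * toEuclideanCLM (𝕜 := 𝕜) Vᴴ b i := by
  simp only [ofLp_toEuclideanCLM, mulVec, dotProduct, conjTranspose_apply, RCLike.star_def,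
    Finset.sum_mul_sum]
  simp only [Fintype.sum_prod_type, map_sum, map_mul, Finset.sum_mul]
  refine (Finset.sum_congr rfl fun x _ => Finset.sum_comm).trans (Finset.sum_comm.trans ?_)
  simp only [mul_mul_mul_comm]

variable {κ : Type*} [Fintype κ]

theorem Matrix.sum_conj_sum_mul_schmidt (U V : Matrix ι ι 𝕜) (a b : κ → EuclideanSpace 𝕜 ι)
    (c : κ → 𝕜) :
    ∑ p : ι × ι, conj (∑ i, U p.1 i * V p.2 i) * ∑ j, c j * (a j p.1 * b j p.2) =
      ∑ j, c j * ∑ i, toEuclideanCLM (𝕜 := 𝕜) Uᴴ (a j) i * toEuclideanCLM (𝕜 := 𝕜) Vᴴ (b j) i := by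
  simp only [← sum_conj_sum_mul_tmul, Finset.mul_sum]
  rw [Finset.sum_comm]
  simp only [mul_left_comm]

theorem Matrix.norm_sum_schmidt_le {U V : Matrix ι ι 𝕜} (hU : U ∈ unitaryGroup ι 𝕜)
    (hV : V ∈ unitaryGroup ι 𝕜) {a b : κ → EuclideanSpace 𝕜 ι} (ha : ∀ j, ‖a j‖ = 1)
    (hb : ∀ j, ‖b j‖ = 1) {lam : κ → ℝ} (hlam : ∀ j, 0 ≤ lam j) :
    ‖∑ j, (lam j : 𝕜) *
        ∑ i, toEuclideanCLM (𝕜 := 𝕜) Uᴴ (a j) i * toEuclideanCLM (𝕜 := 𝕜) Vᴴ (b j) i‖ ≤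
      ∑ j, lam j := by
  refine (norm_sum_le _ _).trans (Finset.sum_le_sum fun j _ => ?_)
  have hcs := EuclideanSpace.norm_sum_mul_le (toEuclideanCLM (𝕜 := 𝕜) Uᴴ (a j))
    (toEuclideanCLM (𝕜 := 𝕜) Vᴴ (b j))
  rw [norm_toEuclideanCLM_conjTranspose_apply hU, norm_toEuclideanCLM_conjTranspose_apply hV,
    ha, hb, mul_one] at hcs
  rw [norm_mul, RCLike.norm_ofReal, abs_of_nonneg (hlam j)]
  exact mul_le_of_le_one_right (hlam j) hcs

end

theorem fully_entangled_fraction_general (d k : ℕ) (hkd : k ≤ d)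
    (a b : Fin k → EuclideanSpace ℂ (Fin d)) (lam : Fin k → ℝ)
    (ha : Orthonormal ℂ a) (hb : Orthonormal ℂ b)
    (hlam : ∀ i, 0 ≤ lam i) (hnorm : ∑ i, lam i ^ 2 = 1)
    (ψ : Fin d × Fin d → ℂ)
    (hψ : ∀ p, ψ p = ∑ i, (lam i : ℂ) * (a i p.1 * b i p.2)) :
    IsGreatest
      {t : ℝ | ∃ U V : Matrix.unitaryGroup (Fin d) ℂ,
        t = ‖∑ p : Fin d × Fin d,
              conj ((1 / (Real.sqrt d : ℂ)) *
                ∑ i, (U : Matrix (Fin d) (Fin d) ℂ) p.1 i *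
                     (V : Matrix (Fin d) (Fin d) ℂ) p.2 i) * ψ p‖ ^ 2}
      ((∑ i, lam i) ^ 2 / d) ∧
    (∑ i, lam i) ^ 2 / d ≤ k / d := by
  have hamp : ∀ U V : Matrix (Fin d) (Fin d) ℂ,
      ‖∑ p : Fin d × Fin d, conj ((1 / (Real.sqrt d : ℂ)) * ∑ i, U p.1 i * V p.2 i) * ψ p‖ ^ 2 =
        ‖∑ j, (lam j : ℂ) * ∑ i, toEuclideanCLM (𝕜 := ℂ) Uᴴ (a j) i *
          toEuclideanCLM (𝕜 := ℂ) Vᴴ (b j) i‖ ^ 2 / d := by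
    intro U V
    simp only [hψ, map_mul, mul_assoc, ← Finset.mul_sum, sum_conj_sum_mul_schmidt, norm_mul,
      RCLike.norm_conj, mul_pow, norm_div, norm_one, Complex.norm_real, Real.norm_eq_abs,
      div_pow, sq_abs, Real.sq_sqrt (Nat.cast_nonneg d)]
    ring
  refine ⟨⟨?_, ?_⟩, ?_⟩
  · obtain ⟨u, hu⟩ :=
      ha.exists_orthonormalBasis_extension_of_embedding (by simp) (Fin.castLEEmb hkd)
    obtain ⟨w, hw⟩ :=
      hb.exists_orthonormalBasis_extension_of_embedding (by simp) (Fin.castLEEmb hkd)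
    refine ⟨⟨_, (EuclideanSpace.basisFun _ ℂ).toMatrix_orthonormalBasis_mem_unitary u⟩,
      ⟨_, (EuclideanSpace.basisFun _ ℂ).toMatrix_orthonormalBasis_mem_unitary w⟩, ?_⟩
    rw [hamp]
    simp only [← hu, ← hw, OrthonormalBasis.sum_toEuclideanCLM_conjTranspose_toMatrix_self,
      mul_one]
    rw [← Complex.ofReal_sum, Complex.norm_real, Real.norm_eq_abs, sq_abs]
  · rintro _ ⟨U, V, rfl⟩
    rw [hamp]
    gcongr
    exact norm_sum_schmidt_le U.2 V.2 ha.1 hb.1 hlam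
  · gcongr
    simpa [hnorm] using sq_sum_le_card_mul_sum_sq (s := Finset.univ) (f := lam)

/-- The fully entangled fraction of a pure state of Schmidt rank at most `k`:
the maximum over maximally entangled states `Φ = (U ⊗ V)ψ₊` of `|⟨Φ, ψ⟩|²`
equals `(∑ λᵢ)²/d`, which is at most `k/d`. -/
theorem fully_entangled_fraction (d k : ℕ) (hd : 0 < d) (hk : 0 < k) (hkd : k ≤ d)
    (a b : Fin k → EuclideanSpace ℂ (Fin d)) (lam : Fin k → ℝ)
    (ha : Orthonormal ℂ a) (hb : Orthonormal ℂ b)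
    (hlam : ∀ i, 0 ≤ lam i) (hnorm : ∑ i, lam i ^ 2 = 1)
    (ψ : Fin d × Fin d → ℂ)
    (hψ : ∀ p, ψ p = ∑ i, (lam i : ℂ) * (a i p.1 * b i p.2)) :
    IsGreatest
      {t : ℝ | ∃ U V : Matrix.unitaryGroup (Fin d) ℂ,
        t = ‖∑ p : Fin d × Fin d,
              conj ((1 / (Real.sqrt d : ℂ)) *
                ∑ i, (U : Matrix (Fin d) (Fin d) ℂ) p.1 i *
                     (V : Matrix (Fin d) (Fin d) ℂ) p.2 i) * ψ p‖ ^ 2}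
      ((∑ i, lam i) ^ 2 / d) ∧
    (∑ i, lam i) ^ 2 / d ≤ k / d :=
  fully_entangled_fraction_general d k hkd a b lam ha hb hlam hnorm ψ hψ
end

section
/- A Hermitian-preserving linear map Λ: M_d(C) → M_{d'}(C) is k-positive if and only if (I_k ⊗ Λ)(|ψ⟩⟨ψ|) ≥ 0 for all maximally entangled vectors ψ ∈ C^k ⊗ C^d (i.e., vectors of the form Σ_{i=1}^k e_i ⊗ f_i with f_i orthonormal, up to normalization). -/
/-!
A positive semidefinite `ρ` is a sum of rank-one terms `u uᴴ`. Since `k ≤ d`, the `k` slices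
`u (a, ·)` lie in the span of `k` orthonormal vectors `f i`, so `u = (M ⊗ 1) ψ` with
`ψ = ∑ i, e i ⊗ f i` maximally entangled. As `I_k ⊗ Λ` commutes with multiplication by
`M ⊗ 1` on either side, `(I_k ⊗ Λ)(u uᴴ) = (M ⊗ 1) (I_k ⊗ Λ)(ψ ψᴴ) (M ⊗ 1)ᴴ ≥ 0`.
-/

open scoped BigOperators ComplexConjugate ComplexOrder

noncomputable section

/-- The extension `(I_k ⊗ Λ)` of a map `Λ : M_d → M_{d'}`, acting blockwise
on matrices over `ℂ^k ⊗ ℂ^d`. -/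
def matExt {d d' : ℕ} (k : ℕ) (Λ : Matrix (Fin d) (Fin d) ℂ → Matrix (Fin d') (Fin d') ℂ)
    (ρ : Matrix (Fin k × Fin d) (Fin k × Fin d) ℂ) :
    Matrix (Fin k × Fin d') (Fin k × Fin d') ℂ :=
  fun p q => (Λ (Matrix.of fun i j => ρ (p.1, i) (q.1, j))) p.2 q.2

open Matrix Kronecker Module Submodule InnerProductSpace

theorem exists_orthonormal_range_subset_span {𝕜 E : Type*} [RCLike 𝕜] [NormedAddCommGroup E]
    [InnerProductSpace 𝕜 E] [FiniteDimensional 𝕜 E] {k : ℕ} (hk : k ≤ finrank 𝕜 E)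
    (g : Fin k → E) :
    ∃ f : Fin k → E, Orthonormal 𝕜 f ∧ Set.range g ⊆ span 𝕜 (Set.range f) := by
  let g' : Fin (finrank 𝕜 E) → E := fun j => if hj : (j : ℕ) < k then g ⟨j, hj⟩ else 0
  let b := gramSchmidtOrthonormalBasis (Fintype.card_fin _).symm g'
  refine ⟨b ∘ Fin.castLE hk, b.orthonormal.comp _ (Fin.castLE_injective hk), ?_⟩
  rintro _ ⟨a, rfl⟩
  have hga : g a = g' (Fin.castLE hk a) := by simp [g']
  rw [hga, ← b.sum_repr' (g' _)]
  refine sum_mem fun j _ => ?_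
  by_cases hj : (j : ℕ) < k
  · exact smul_mem _ _ (subset_span ⟨⟨j, hj⟩, rfl⟩)
  · -- Gram–Schmidt is triangular: `b j` is orthogonal to every `g' i` with `i < j`.
    rw [gramSchmidtOrthonormalBasis_inv_triangular _ _ (by simp [Fin.lt_def]; omega), zero_smul]
    exact zero_mem _

namespace Matrix

variable {R l m m' l' n n' o : Type*} [CommSemiring R] [Fintype m] [Fintype n] [DecidableEq n]

theorem kronecker_one_mulVec_apply (M : Matrix l m R) (v : m × n → R) (a : l) (x : n) :
    ((M ⊗ₖ (1 : Matrix n n R)) *ᵥ v) (a, x) = ∑ i, M a i * v (i, x) := by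
  simp [mulVec, dotProduct, Fintype.sum_prod_type, one_apply]

theorem kronecker_one_mul_apply (M : Matrix l m R) (A : Matrix (m × n) o R) (a : l) (x : n)
    (q : o) : ((M ⊗ₖ (1 : Matrix n n R)) * A) (a, x) q = ∑ i, M a i * A (i, x) q := by
  simp [mul_apply, Fintype.sum_prod_type, one_apply]

theorem mul_kronecker_one_apply (A : Matrix o (m × n) R) (N : Matrix m l R) (p : o) (b : l)
    (y : n) : (A * (N ⊗ₖ (1 : Matrix n n R))) p (b, y) = ∑ j, A p (j, y) * N j b := by
  simp [mul_apply, Fintype.sum_prod_type, one_apply]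

theorem submatrix_kronecker_one_mul_mul_kronecker_one [Fintype m'] [Fintype n'] [DecidableEq n']
    (M : Matrix l m R) (ρ : Matrix (m × n) (m' × n') R) (N : Matrix m' l' R) (a : l) (b : l') :
    ((M ⊗ₖ (1 : Matrix n n R)) * ρ * (N ⊗ₖ (1 : Matrix n' n' R))).submatrix (Prod.mk a)
        (Prod.mk b) =
      ∑ i, ∑ j, (M a i * N j b) • ρ.submatrix (Prod.mk i) (Prod.mk j) := by
  ext x y
  simp only [submatrix_apply, mul_kronecker_one_apply, kronecker_one_mul_apply, sum_apply,
    smul_apply, smul_eq_mul, Finset.sum_mul]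
  rw [Finset.sum_comm]
  exact Finset.sum_congr rfl fun i _ => Finset.sum_congr rfl fun j _ => by ring

theorem vecMulVec_mulVec_star [Fintype l] (A : Matrix l m ℂ) (v : m → ℂ) :
    vecMulVec (A *ᵥ v) (star (A *ᵥ v)) = A * vecMulVec v (star v) * Aᴴ := by
  rw [mul_vecMulVec, vecMulVec_mul, star_mulVec]

end Matrix

variable {d d' k : ℕ}

theorem exists_orthonormal_eq_kronecker_one_mulVec (hk : k ≤ d) (u : Fin k × Fin d → ℂ) :
    ∃ f : Fin k → EuclideanSpace ℂ (Fin d), Orthonormal ℂ f ∧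
      ∃ M : Matrix (Fin k) (Fin k) ℂ, u = (M ⊗ₖ 1) *ᵥ fun p => f p.1 p.2 := by
  obtain ⟨f, hf, hspan⟩ := exists_orthonormal_range_subset_span (𝕜 := ℂ)
    (hk.trans_eq finrank_euclideanSpace_fin.symm)
    fun a => WithLp.toLp 2 fun x => u (a, x)
  choose M hM using fun a => (mem_span_range_iff_exists_fun ℂ).1 (hspan ⟨a, rfl⟩)
  refine ⟨f, hf, of M, funext fun ⟨a, x⟩ => ?_⟩
  have := congrArg (fun v : EuclideanSpace ℂ (Fin d) => v x) (hM a)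
  rw [kronecker_one_mulVec_apply]
  simpa using this.symm

theorem matExt_apply (Λ : Matrix (Fin d) (Fin d) ℂ → Matrix (Fin d') (Fin d') ℂ)
    (ρ : Matrix (Fin k × Fin d) (Fin k × Fin d) ℂ) (p q : Fin k × Fin d') :
    matExt k Λ ρ p q = Λ (ρ.submatrix (Prod.mk p.1) (Prod.mk q.1)) p.2 q.2 := rfl

theorem matExt_sum (Λ : Matrix (Fin d) (Fin d) ℂ →ₗ[ℂ] Matrix (Fin d') (Fin d') ℂ) {ι : Type*}
    (s : Finset ι) (ρ : ι → Matrix (Fin k × Fin d) (Fin k × Fin d) ℂ) :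
    matExt k Λ (∑ c ∈ s, ρ c) = ∑ c ∈ s, matExt k Λ (ρ c) := by
  ext p q
  have : (∑ c ∈ s, ρ c).submatrix (Prod.mk p.1) (Prod.mk q.1) =
      ∑ c ∈ s, (ρ c).submatrix (Prod.mk p.1) (Prod.mk q.1) := by
    ext; simp [Matrix.sum_apply]
  simp only [matExt_apply, this, map_sum, Matrix.sum_apply]

theorem matExt_kronecker_one_mul_mul
    (Λ : Matrix (Fin d) (Fin d) ℂ →ₗ[ℂ] Matrix (Fin d') (Fin d') ℂ)
    (M N : Matrix (Fin k) (Fin k) ℂ) (ρ : Matrix (Fin k × Fin d) (Fin k × Fin d) ℂ) :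
    matExt k Λ ((M ⊗ₖ 1) * ρ * (N ⊗ₖ 1)) = (M ⊗ₖ 1) * matExt k Λ ρ * (N ⊗ₖ 1) := by
  ext ⟨a, x⟩ ⟨b, y⟩
  have h := congrFun₂
    (submatrix_kronecker_one_mul_mul_kronecker_one M (matExt k Λ ρ) N a b) x y
  simp only [submatrix_apply] at h
  rw [h, matExt_apply, submatrix_kronecker_one_mul_mul_kronecker_one]
  simp [Matrix.sum_apply, matExt_apply]

theorem matExt_vecMulVec_posSemidef (hk : k ≤ d)
    (Λ : Matrix (Fin d) (Fin d) ℂ →ₗ[ℂ] Matrix (Fin d') (Fin d') ℂ)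
    (h : ∀ f : Fin k → EuclideanSpace ℂ (Fin d), Orthonormal ℂ f →
      (matExt k Λ (vecMulVec (fun p => f p.1 p.2) (star fun p => f p.1 p.2))).PosSemidef)
    (u : Fin k × Fin d → ℂ) : (matExt k Λ (vecMulVec u (star u))).PosSemidef := by
  obtain ⟨f, hf, M, rfl⟩ := exists_orthonormal_eq_kronecker_one_mulVec hk u
  have hM {n : ℕ} : (M ⊗ₖ (1 : Matrix (Fin n) (Fin n) ℂ))ᴴ = Mᴴ ⊗ₖ 1 := by
    rw [conjTranspose_kronecker, conjTranspose_one]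
  rw [vecMulVec_mulVec_star, hM, matExt_kronecker_one_mul_mul, ← hM]
  exact (h f hf).mul_mul_conjTranspose_same _

theorem kpositive_iff_positive_on_maximally_entangled_general (d d' k : ℕ) (hk : k ≤ d)
    (Λ : Matrix (Fin d) (Fin d) ℂ →ₗ[ℂ] Matrix (Fin d') (Fin d') ℂ) :
    (∀ ρ : Matrix (Fin k × Fin d) (Fin k × Fin d) ℂ, ρ.PosSemidef →
        (matExt k (fun A => Λ A) ρ).PosSemidef) ↔
    (∀ f : Fin k → EuclideanSpace ℂ (Fin d), Orthonormal ℂ f →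
        (matExt k (fun A => Λ A)
          (Matrix.of fun p q : Fin k × Fin d =>
            f p.1 p.2 * conj (f q.1 q.2))).PosSemidef) := by
  refine ⟨fun H f _ => H _ (posSemidef_vecMulVec_self_star _), fun H ρ hρ => ?_⟩
  obtain ⟨m, v, rfl⟩ := posSemidef_iff_eq_sum_vecMulVec.1 hρ
  rw [matExt_sum]
  exact posSemidef_sum _ fun i _ => matExt_vecMulVec_posSemidef hk Λ H (v i)

/-- A Hermitian-preserving linear map `Λ` is `k`-positive iff
`(I_k ⊗ Λ)(|ψ⟩⟨ψ|) ≥ 0` for all maximally entangled vectors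
`ψ = ∑ i, e i ⊗ f i` (with `f` orthonormal, up to normalization). -/
theorem kpositive_iff_positive_on_maximally_entangled (d d' k : ℕ) (hk : k ≤ d)
    (Λ : Matrix (Fin d) (Fin d) ℂ →ₗ[ℂ] Matrix (Fin d') (Fin d') ℂ)
    (hherm : ∀ A : Matrix (Fin d) (Fin d) ℂ, A.IsHermitian → (Λ A).IsHermitian) :
    (∀ ρ : Matrix (Fin k × Fin d) (Fin k × Fin d) ℂ, ρ.PosSemidef →
        (matExt k (fun A => Λ A) ρ).PosSemidef) ↔
    (∀ f : Fin k → EuclideanSpace ℂ (Fin d), Orthonormal ℂ f →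
        (matExt k (fun A => Λ A)
          (Matrix.of fun p q : Fin k × Fin d =>
            f p.1 p.2 * conj (f q.1 q.2))).PosSemidef) :=
  kpositive_iff_positive_on_maximally_entangled_general d d' k hk Λ
end
end

section
/- For the maximally entangled state P_+ in C^d ⊗ C^d and any density matrix σ on C^d ⊗ C^d with Schmidt number at most n, if t ≥ 0 is such that P_+ + tσ (after normalization) has Schmidt number at most n, then t ≥ (d−n)/n. In particular the generalised Schmidt-n robustness of P_+ is at least (d−n)/n. -/
open scoped BigOperators ComplexConjugate ComplexOrder

noncomputable section

/-- The maximally entangled unit vector `ψ₊ = (1/√d) ∑ i, e i ⊗ e i`. -/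
def maxEnt (d : ℕ) : Fin d × Fin d → ℂ :=
  fun p => if p.1 = p.2 then ((1 / Real.sqrt d : ℝ) : ℂ) else 0

/-- The projection `P₊ = |ψ₊⟩⟨ψ₊|`. -/
def Pplus (d : ℕ) : Matrix (Fin d × Fin d) (Fin d × Fin d) ℂ :=
  fun p q => maxEnt d p * conj (maxEnt d q)

/-- A vector of `ℂ^d ⊗ ℂ^d` has Schmidt rank at most `n`. -/
def SchmidtRankLE (d n : ℕ) (ψ : Fin d × Fin d → ℂ) : Prop :=
  ∃ a b : Fin n → Fin d → ℂ, ∀ p, ψ p = ∑ i, a i p.1 * b i p.2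

/-- A positive operator has Schmidt number at most `n` if it is a nonnegative
combination of pure states of Schmidt rank at most `n`. -/
def SchmidtNumberLE (d n : ℕ) (ρ : Matrix (Fin d × Fin d) (Fin d × Fin d) ℂ) : Prop :=
  ∃ (m : ℕ) (c : Fin m → ℝ) (ψ : Fin m → Fin d × Fin d → ℂ),
    (∀ t, 0 ≤ c t) ∧ (∀ t, SchmidtRankLE d n (ψ t)) ∧
    ∀ p q, ρ p q = ∑ t, (c t : ℂ) * (ψ t p * conj (ψ t q))

/-!
Read a vector `ψ` of `ℂ^d ⊗ ℂ^d` as the `d × d` matrix `Ψ` of its coefficients. Schmidt rank at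
most `n` means that the columns of `Ψ` lie in a subspace of dimension at most `n`; expanding them
in an orthonormal basis of that subspace and applying Cauchy–Schwarz twice gives
`|tr Ψ|² ≤ n ‖Ψ‖²`. Since `tr Ψ = √d ⟨ψ₊, ψ⟩`, summing over a decomposition of `ρ` yields
`d ⟨ψ₊, ρ ψ₊⟩ ≤ n Tr ρ` whenever `ρ` has Schmidt number at most `n`. For `ρ = P₊ + t σ` the left
side is at least `d` and `Tr ρ = 1 + t`, so `d ≤ n (1 + t)`.
-/

open Matrix Module

lemma norm_sum_mul_sq_le {𝕜 ι : Type*} [RCLike 𝕜] (s : Finset ι) (a b : ι → 𝕜) :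
    ‖∑ i ∈ s, a i * b i‖ ^ 2 ≤ (∑ i ∈ s, ‖a i‖ ^ 2) * ∑ i ∈ s, ‖b i‖ ^ 2 := by
  calc ‖∑ i ∈ s, a i * b i‖ ^ 2 ≤ (∑ i ∈ s, ‖a i‖ * ‖b i‖) ^ 2 := by
        gcongr
        exact (norm_sum_le _ _).trans_eq (by simp only [norm_mul])
    _ ≤ _ := Finset.sum_mul_sq_le_sq_mul_sq _ _ _

lemma norm_sum_sq_le_card_mul {𝕜 ι : Type*} [RCLike 𝕜] (s : Finset ι) (x : ι → 𝕜) :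
    ‖∑ i ∈ s, x i‖ ^ 2 ≤ s.card * ∑ i ∈ s, ‖x i‖ ^ 2 := by
  simpa using norm_sum_mul_sq_le s (fun _ => (1 : 𝕜)) x

theorem norm_sum_diag_sq_le_finrank_mul {𝕜 ι : Type*} [RCLike 𝕜] [Fintype ι]
    {W : Submodule 𝕜 (EuclideanSpace 𝕜 ι)} (v : ι → W) :
    ‖∑ k, (v k : EuclideanSpace 𝕜 ι) k‖ ^ 2 ≤ finrank 𝕜 W * ∑ k, ‖v k‖ ^ 2 := by
  set f := stdOrthonormalBasis 𝕜 W
  have hexpand : ∀ k, (v k : EuclideanSpace 𝕜 ι) k =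
      ∑ j, inner 𝕜 (f j) (v k) * (f j : EuclideanSpace 𝕜 ι) k := by
    intro k
    conv_lhs => rw [← f.sum_repr' (v k)]
    simp
  have hunit : ∀ j, ∑ k, ‖(f j : EuclideanSpace 𝕜 ι) k‖ ^ 2 = 1 := fun j => by
    have : ‖(f j : EuclideanSpace 𝕜 ι)‖ = 1 := f.orthonormal.1 j
    rw [← EuclideanSpace.norm_sq_eq, this, one_pow]
  calc ‖∑ k, (v k : EuclideanSpace 𝕜 ι) k‖ ^ 2
      = ‖∑ j, ∑ k, inner 𝕜 (f j) (v k) * (f j : EuclideanSpace 𝕜 ι) k‖ ^ 2 := by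
        simp only [hexpand]; rw [Finset.sum_comm]
    _ ≤ finrank 𝕜 W * ∑ j, ‖∑ k, inner 𝕜 (f j) (v k) * (f j : EuclideanSpace 𝕜 ι) k‖ ^ 2 := by
        simpa only [Finset.card_univ, Fintype.card_fin] using
          norm_sum_sq_le_card_mul Finset.univ fun j =>
            ∑ k, inner 𝕜 (f j) (v k) * (f j : EuclideanSpace 𝕜 ι) k
    _ ≤ finrank 𝕜 W * ∑ j, ∑ k, ‖inner 𝕜 (f j) (v k)‖ ^ 2 := by
        gcongr with j
        simpa only [hunit, mul_one] using
          norm_sum_mul_sq_le Finset.univ (fun k => inner 𝕜 (f j) (v k)) fun k =>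
            (f j : EuclideanSpace 𝕜 ι) k
    _ = finrank 𝕜 W * ∑ k, ‖v k‖ ^ 2 := by
        rw [Finset.sum_comm]
        simp only [f.sum_sq_norm_inner_right]

lemma SchmidtRankLE.exists_columns_mem {d n : ℕ} {ψ : Fin d × Fin d → ℂ}
    (h : SchmidtRankLE d n ψ) :
    ∃ W : Submodule ℂ (EuclideanSpace ℂ (Fin d)), finrank ℂ W ≤ n ∧
      ∀ q, WithLp.toLp 2 (fun p => ψ (p, q)) ∈ W := by
  obtain ⟨a, b, hab⟩ := h
  refine ⟨Submodule.span ℂ (Set.range fun i => WithLp.toLp 2 (a i)), ?_, fun q => ?_⟩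
  · exact (finrank_range_le_card (R := ℂ) _).trans_eq (Fintype.card_fin n)
  · have hsum : WithLp.toLp 2 (fun p => ψ (p, q)) = ∑ i, b i q • WithLp.toLp 2 (a i) := by
      ext p
      simp [hab, mul_comm]
    rw [hsum]
    exact Submodule.sum_mem _ fun i _ => Submodule.smul_mem _ _ (Submodule.subset_span ⟨i, rfl⟩)

theorem SchmidtRankLE.norm_sum_diag_sq_le {d n : ℕ} {ψ : Fin d × Fin d → ℂ}
    (h : SchmidtRankLE d n ψ) : ‖∑ k, ψ (k, k)‖ ^ 2 ≤ n * ∑ p, ‖ψ p‖ ^ 2 := by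
  obtain ⟨W, hW, hcol⟩ := h.exists_columns_mem
  calc ‖∑ k, ψ (k, k)‖ ^ 2
      ≤ finrank ℂ W * ∑ q, ‖WithLp.toLp 2 (fun p => ψ (p, q))‖ ^ 2 :=
        norm_sum_diag_sq_le_finrank_mul fun q => ⟨_, hcol q⟩
    _ ≤ n * ∑ p, ‖ψ p‖ ^ 2 := by
        rw [Fintype.sum_prod_type_right]
        simp only [EuclideanSpace.norm_sq_eq]
        gcongr

-- This is `√d • maxEnt d`; pairing with it gives `d ⟨ψ₊, ρ ψ₊⟩` without square roots.
def diagIndicator (d : ℕ) : Fin d × Fin d → ℂ := fun p => if p.1 = p.2 then 1 else 0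

lemma star_diagIndicator_dotProduct {d : ℕ} (φ : Fin d × Fin d → ℂ) :
    star (diagIndicator d) ⬝ᵥ φ = ∑ k, φ (k, k) := by
  simp [diagIndicator, dotProduct, Fintype.sum_prod_type, apply_ite]

lemma star_dotProduct_vecMulVec_mulVec {ι : Type*} [Fintype ι] (v φ : ι → ℂ) :
    star v ⬝ᵥ vecMulVec φ (star φ) *ᵥ v = (‖star v ⬝ᵥ φ‖ ^ 2 : ℝ) := by
  rw [vecMulVec_mulVec, dotProduct_smul, star_dotProduct (v := φ), op_smul_eq_mul,
    Complex.star_def, Complex.mul_conj, Complex.normSq_eq_norm_sq]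

lemma trace_vecMulVec_star {ι : Type*} [Fintype ι] (φ : ι → ℂ) :
    (vecMulVec φ (star φ)).trace = (∑ i, ‖φ i‖ ^ 2 : ℝ) := by
  simp [trace_vecMulVec, dotProduct, Complex.mul_conj, Complex.normSq_eq_norm_sq]

theorem SchmidtNumberLE.diagIndicator_pairing_le {d n : ℕ}
    {ρ : Matrix (Fin d × Fin d) (Fin d × Fin d) ℂ} (h : SchmidtNumberLE d n ρ) :
    star (diagIndicator d) ⬝ᵥ ρ *ᵥ diagIndicator d ≤ n * ρ.trace := by
  obtain ⟨m, c, φ, hc, hφ, hρ⟩ := h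
  have hρ' : ρ = ∑ s, (c s : ℂ) • vecMulVec (φ s) (star (φ s)) := by
    ext p q
    simp [hρ, Matrix.sum_apply, vecMulVec]
  rw [hρ', sum_mulVec, dotProduct_sum, trace_sum, Finset.mul_sum]
  gcongr with s
  rw [smul_mulVec, dotProduct_smul, trace_smul, star_dotProduct_vecMulVec_mulVec,
    trace_vecMulVec_star, star_diagIndicator_dotProduct, smul_eq_mul, smul_eq_mul, mul_left_comm]
  gcongr
  · exact_mod_cast hc s
  · exact_mod_cast (hφ s).norm_sum_diag_sq_le

lemma Pplus_eq_vecMulVec (d : ℕ) : Pplus d = vecMulVec (maxEnt d) (star (maxEnt d)) := rfl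

lemma diagIndicator_pairing_Pplus (d : ℕ) :
    star (diagIndicator d) ⬝ᵥ Pplus d *ᵥ diagIndicator d = d := by
  rw [Pplus_eq_vecMulVec, star_dotProduct_vecMulVec_mulVec, star_diagIndicator_dotProduct]
  simp only [maxEnt, if_pos, Finset.sum_const, Finset.card_univ, Fintype.card_fin, nsmul_eq_mul]
  rw [← Complex.ofReal_natCast, ← Complex.ofReal_mul, mul_one_div, Real.div_sqrt,
    Complex.norm_real, Real.norm_eq_abs, sq_abs, Real.sq_sqrt d.cast_nonneg, Complex.ofReal_natCast]

lemma trace_Pplus {d : ℕ} (hd : 0 < d) : (Pplus d).trace = 1 := by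
  have hnorm : ∀ p : Fin d × Fin d, ‖maxEnt d p‖ ^ 2 = if p.1 = p.2 then (d : ℝ)⁻¹ else 0 := by
    intro p
    split_ifs with hp <;> simp [maxEnt, hp]
  rw [Pplus_eq_vecMulVec, trace_vecMulVec_star, Fintype.sum_congr _ _ hnorm, Fintype.sum_prod_type]
  simp [hd.ne']

theorem generalised_schmidt_robustness_lower_bound_general (d n : ℕ) (hd : 0 < d)
    (σ : Matrix (Fin d × Fin d) (Fin d × Fin d) ℂ)
    (hσ : σ.PosSemidef) (hσtr : σ.trace = 1)
    (t : ℝ) (ht : 0 ≤ t)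
    (h : SchmidtNumberLE d n (Pplus d + (t : ℂ) • σ)) :
    ((d : ℝ) - n) / n ≤ t := by
  have hwitness := h.diagIndicator_pairing_le
  rw [add_mulVec, smul_mulVec, dotProduct_add, dotProduct_smul, diagIndicator_pairing_Pplus,
    trace_add, trace_smul, trace_Pplus hd, hσtr, smul_eq_mul, smul_eq_mul, mul_one] at hwitness
  have hσ_pairing : 0 ≤ (t : ℂ) * (star (diagIndicator d) ⬝ᵥ σ *ᵥ diagIndicator d) :=
    mul_nonneg (by exact_mod_cast ht) (hσ.dotProduct_mulVec_nonneg _)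
  have hdn : (d : ℝ) ≤ n * (1 + t) := by
    exact_mod_cast (le_add_of_nonneg_right hσ_pairing).trans hwitness
  exact div_le_of_le_mul₀ n.cast_nonneg ht (by linarith)

/-- Lower bound for the generalised Schmidt-`n` robustness of the maximally
entangled state: if `σ` is a density matrix of Schmidt number at most `n`,
`t ≥ 0`, and `P₊ + t σ` (up to normalization) has Schmidt number at most `n`,
then `t ≥ (d − n)/n`. -/
theorem generalised_schmidt_robustness_lower_bound (d n : ℕ) (hd : 0 < d) (hn : 0 < n)
    (σ : Matrix (Fin d × Fin d) (Fin d × Fin d) ℂ)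
    (hσ : σ.PosSemidef) (hσtr : σ.trace = 1) (hσn : SchmidtNumberLE d n σ)
    (t : ℝ) (ht : 0 ≤ t)
    (h : SchmidtNumberLE d n (Pplus d + (t : ℂ) • σ)) :
    ((d : ℝ) - n) / n ≤ t :=
  generalised_schmidt_robustness_lower_bound_general d n hd σ hσ hσtr t ht h
end
end

section
/- Any PPT state ρ on C^d ⊗ C^d satisfies Tr(ρ P_+) ≤ 1/d, where P_+ is the projection onto the maximally entangled state. -/
/-! With `σ = ρ^{T_B}`, the identity `Tr(ρ P₊) = (1/d) Tr(σ F)` says that `d · Tr(ρ P₊)` is the sum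
of the entries `σ_{p, swap p}`. For positive semidefinite `σ` each `2 Re σ_{pq} ≤ σ_{pp} + σ_{qq}`,
so summing along any permutation of the indices gives at most `Tr σ = Tr ρ = 1`; for the swap,
an involution, that sum is moreover real. -/

open scoped BigOperators ComplexConjugate ComplexOrder

noncomputable section

/-- The partial transpose on the second tensor factor. -/
def ptB {d : ℕ} (ρ : Matrix (Fin d × Fin d) (Fin d × Fin d) ℂ) :
    Matrix (Fin d × Fin d) (Fin d × Fin d) ℂ :=
  fun p q => ρ (p.1, q.2) (q.1, p.2)

section PosSemidef

open RCLike

variable {𝕜 n : Type*} [RCLike 𝕜] [Fintype n] {A : Matrix n n 𝕜}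

theorem Matrix.PosSemidef.two_mul_re_apply_le (hA : A.PosSemidef) (p q : n) :
    2 * re (A p q) ≤ re (A p p) + re (A q q) := by
  classical
  have hx := hA.dotProduct_mulVec_nonneg (Pi.single p 1 - Pi.single q 1)
  have hqp : A q p = star (A p q) := (hA.isHermitian.apply q p).symm
  simp only [star_sub, Pi.star_single, star_one, Matrix.mulVec_sub, Matrix.mulVec_single_one,
    sub_dotProduct, dotProduct_sub, single_one_dotProduct, Matrix.col_apply, hqp] at hx
  have := (RCLike.nonneg_iff.mp hx).1
  simp only [map_sub, RCLike.star_def, RCLike.conj_re] at this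
  linarith

theorem Matrix.PosSemidef.re_sum_apply_perm_le (hA : A.PosSemidef) (e : Equiv.Perm n) :
    re (∑ p, A p (e p)) ≤ re A.trace := by
  have h := Finset.sum_le_sum fun p (_ : p ∈ Finset.univ) => hA.two_mul_re_apply_le p (e p)
  rw [← Finset.mul_sum, Finset.sum_add_distrib, Equiv.sum_comp e (fun q => re (A q q))] at h
  simp only [map_sum, Matrix.trace, Matrix.diag]
  linarith

theorem Matrix.IsHermitian.star_sum_apply_involutive (hA : A.IsHermitian)
    {e : n → n} (he : Function.Involutive e) :
    star (∑ p, A p (e p)) = ∑ p, A p (e p) := by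
  calc star (∑ p, A p (e p)) = ∑ p, A (e p) (e (e p)) := by
        refine (star_sum _ _).trans (Finset.sum_congr rfl fun p _ => ?_)
        rw [he p, hA.apply]
    _ = ∑ p, A p (e p) := Equiv.sum_comp he.toPerm (fun q => A q (e q))

theorem Matrix.PosSemidef.sum_apply_involutive_le_trace (hA : A.PosSemidef)
    {e : n → n} (he : Function.Involutive e) :
    ∑ p, A p (e p) ≤ A.trace := by
  have hsum := hA.isHermitian.star_sum_apply_involutive he
  have htr := RCLike.nonneg_iff.mp hA.trace_nonneg
  refine RCLike.le_iff_re_im.mpr ⟨hA.re_sum_apply_perm_le he.toPerm, ?_⟩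
  rw [htr.2]
  exact RCLike.conj_eq_iff_im.mp hsum

end PosSemidef

theorem trace_ptB {d : ℕ} (ρ : Matrix (Fin d × Fin d) (Fin d × Fin d) ℂ) :
    (ptB ρ).trace = ρ.trace := rfl

theorem Pplus_apply (d : ℕ) (p q : Fin d × Fin d) :
    Pplus d p q = if p.1 = p.2 ∧ q.1 = q.2 then (((1 : ℝ) / d : ℝ) : ℂ) else 0 := by
  have hsq : (1 / Real.sqrt d) * (1 / Real.sqrt d) = (1 : ℝ) / d := by
    rw [div_mul_div_comm, one_mul, Real.mul_self_sqrt d.cast_nonneg]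
  unfold Pplus maxEnt
  split_ifs <;> simp_all [← hsq]

theorem trace_mul_Pplus (d : ℕ) (ρ : Matrix (Fin d × Fin d) (Fin d × Fin d) ℂ) :
    (ρ * Pplus d).trace = (((1 : ℝ) / d : ℝ) : ℂ) * ∑ p, ptB ρ p p.swap := by
  simp only [Matrix.trace, Matrix.diag, Matrix.mul_apply, Pplus_apply, mul_ite, mul_zero,
    Fintype.sum_prod_type, Finset.mul_sum, ptB, Prod.swap]
  simp only [ite_and, Finset.sum_ite_eq, Finset.sum_ite_irrel, Finset.sum_const_zero,
    Finset.mem_univ, if_true, mul_comm]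

theorem ppt_singlet_fraction_bound_general (d : ℕ)
    (ρ : Matrix (Fin d × Fin d) (Fin d × Fin d) ℂ)
    (htr : ρ.trace = 1)
    (hppt : (ptB ρ).PosSemidef) :
    (ρ * Pplus d).trace ≤ (((1 : ℝ) / d : ℝ) : ℂ) := by
  have hinv : (0 : ℂ) ≤ (((1 : ℝ) / d : ℝ) : ℂ) := Complex.zero_le_real.mpr (by positivity)
  calc (ρ * Pplus d).trace = (((1 : ℝ) / d : ℝ) : ℂ) * ∑ p, ptB ρ p p.swap := trace_mul_Pplus d ρ
    _ ≤ (((1 : ℝ) / d : ℝ) : ℂ) * (ptB ρ).trace :=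
      mul_le_mul_of_nonneg_left (hppt.sum_apply_involutive_le_trace Prod.swap_swap) hinv
    _ = (((1 : ℝ) / d : ℝ) : ℂ) := by rw [trace_ptB, htr, mul_one]

/-- Any PPT state `ρ` on `ℂ^d ⊗ ℂ^d` satisfies `Tr(ρ P₊) ≤ 1/d`. -/
theorem ppt_singlet_fraction_bound (d : ℕ) (hd : 0 < d)
    (ρ : Matrix (Fin d × Fin d) (Fin d × Fin d) ℂ)
    (hpsd : ρ.PosSemidef) (htr : ρ.trace = 1)
    (hppt : (ptB ρ).PosSemidef) :
    (ρ * Pplus d).trace ≤ (((1 : ℝ) / d : ℝ) : ℂ) :=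
  ppt_singlet_fraction_bound_general d ρ htr hppt
end
end

section
/- The Werner state ρ_β = (I + βF)/(d² + βd) on C^d ⊗ C^d (with −1 ≤ β ≤ 1, F the swap operator) is 1-distillable if β < −1/2: there exists a Schmidt-rank-2 unit vector ψ with ⟨ψ, ρ_β^{T_B} ψ⟩ < 0. Conversely, for β ≥ −1/2 every Schmidt-rank-2 unit vector ψ satisfies ⟨ψ, ρ_β^{T_B} ψ⟩ ≥ 0. -/
open scoped BigOperators ComplexConjugate ComplexOrder

noncomputable section

/-- The swap (flip) operator `F` on `ℂ^d ⊗ ℂ^d`. -/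
def swapOp (d : ℕ) : Matrix (Fin d × Fin d) (Fin d × Fin d) ℂ :=
  fun p q => if p.1 = q.2 ∧ p.2 = q.1 then 1 else 0

/-- The Werner state `ρ_β = (I + β F)/(d² + β d)`. -/
def werner (d : ℕ) (β : ℝ) : Matrix (Fin d × Fin d) (Fin d × Fin d) ℂ :=
  ((1 / ((d : ℝ) ^ 2 + β * d) : ℝ) : ℂ) •
    ((1 : Matrix (Fin d × Fin d) (Fin d × Fin d) ℂ) + (β : ℂ) • swapOp d)

/-! Partially transposing the swap operator gives `|Φ⟩⟨Φ| = d P₊` for the unnormalised maximally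
entangled vector `Φ = ∑ᵢ eᵢ ⊗ eᵢ`, so `⟨ψ, ρ_β^{T_B} ψ⟩` is a positive multiple of
`‖ψ‖² + β |⟨Φ, ψ⟩|²`. For `ψ = u₀ ⊗ v₀ + u₁ ⊗ v₁` one may assume `u₀ ⟂ u₁`; the two product terms
are then orthogonal, and Cauchy–Schwarz gives `|⟨Φ, u ⊗ v⟩| ≤ ‖u ⊗ v‖`, hence
`|⟨Φ, ψ⟩|² ≤ 2 ‖ψ‖²`. Equality holds for `(e₀ ⊗ e₀ + e₁ ⊗ e₁)/√2`, so the sign of the expectation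
on Schmidt-rank-2 unit vectors changes exactly at `β = -1/2`. -/

open Matrix
open scoped InnerProductSpace

section TensorProduct

variable {ι κ : Type*}

def tprodVec (u : EuclideanSpace ℂ ι) (v : EuclideanSpace ℂ κ) : EuclideanSpace ℂ (ι × κ) :=
  WithLp.toLp 2 fun p => u p.1 * v p.2

@[simp]
lemma tprodVec_apply (u : EuclideanSpace ℂ ι) (v : EuclideanSpace ℂ κ) (p : ι × κ) :
    tprodVec u v p = u p.1 * v p.2 :=
  rfl

lemma toLp_eq_tprodVec_add {ψ : ι × κ → ℂ} {a : Fin 2 → ι → ℂ} {b : Fin 2 → κ → ℂ}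
    (hψ : ∀ p, ψ p = ∑ k, a k p.1 * b k p.2) :
    WithLp.toLp 2 ψ = tprodVec (WithLp.toLp 2 (a 0)) (WithLp.toLp 2 (b 0)) +
      tprodVec (WithLp.toLp 2 (a 1)) (WithLp.toLp 2 (b 1)) := by
  ext p
  simp [hψ, Fin.sum_univ_two]

variable [Fintype ι] [Fintype κ]

lemma inner_tprodVec (u u' : EuclideanSpace ℂ ι) (v v' : EuclideanSpace ℂ κ) :
    ⟪tprodVec u v, tprodVec u' v'⟫_ℂ = ⟪u, u'⟫_ℂ * ⟪v, v'⟫_ℂ := by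
  simp only [PiLp.inner_apply, tprodVec_apply, Fintype.sum_prod_type, Finset.sum_mul_sum,
    RCLike.inner_apply, map_mul]
  exact Finset.sum_congr rfl fun _ _ => Finset.sum_congr rfl fun _ _ => by ring

lemma norm_tprodVec (u : EuclideanSpace ℂ ι) (v : EuclideanSpace ℂ κ) :
    ‖tprodVec u v‖ = ‖u‖ * ‖v‖ := by
  rw [← sq_eq_sq₀ (norm_nonneg _) (by positivity), mul_pow, EuclideanSpace.norm_sq_eq,
    EuclideanSpace.norm_sq_eq, EuclideanSpace.norm_sq_eq, Fintype.sum_prod_type,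
    Finset.sum_mul_sum]
  simp only [tprodVec_apply, norm_mul, mul_pow]

end TensorProduct

section MaxEntangled

variable {ι : Type*} [Fintype ι] [DecidableEq ι]

/-- `√d` times the normalised maximally entangled vector, so that `|Φ⟩⟨Φ| = d P₊`. -/
def maxEntangled (ι : Type*) [DecidableEq ι] : EuclideanSpace ℂ (ι × ι) :=
  WithLp.toLp 2 fun p => if p.1 = p.2 then 1 else 0

lemma inner_maxEntangled (ψ : EuclideanSpace ℂ (ι × ι)) :
    ⟪maxEntangled ι, ψ⟫_ℂ = ∑ i, ψ (i, i) := by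
  simp [PiLp.inner_apply, maxEntangled, Fintype.sum_prod_type, apply_ite]

lemma norm_inner_maxEntangled_tprodVec_le (u v : EuclideanSpace ℂ ι) :
    ‖⟪maxEntangled ι, tprodVec u v⟫_ℂ‖ ≤ ‖tprodVec u v‖ := by
  rw [inner_maxEntangled, norm_tprodVec, EuclideanSpace.norm_eq, EuclideanSpace.norm_eq]
  calc ‖∑ i, tprodVec u v (i, i)‖ ≤ ∑ i, ‖u i‖ * ‖v i‖ := by
        simpa only [tprodVec_apply, norm_mul] using
          norm_sum_le Finset.univ fun i => tprodVec u v (i, i)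
    _ ≤ _ := Real.sum_mul_le_sqrt_mul_sqrt _ _ _

lemma sq_norm_inner_maxEntangled_tprodVec_add_le_of_inner_eq_zero
    {u₀ u₁ : EuclideanSpace ℂ ι} (h : ⟪u₀, u₁⟫_ℂ = 0) (v₀ v₁ : EuclideanSpace ℂ ι) :
    ‖⟪maxEntangled ι, tprodVec u₀ v₀ + tprodVec u₁ v₁⟫_ℂ‖ ^ 2 ≤
      2 * ‖tprodVec u₀ v₀ + tprodVec u₁ v₁‖ ^ 2 := by
  have horth : ⟪tprodVec u₀ v₀, tprodVec u₁ v₁⟫_ℂ = 0 := by rw [inner_tprodVec, h, zero_mul]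
  have hpyth := norm_add_sq_eq_norm_sq_add_norm_sq_of_inner_eq_zero _ _ horth
  have htri := norm_add_le ⟪maxEntangled ι, tprodVec u₀ v₀⟫_ℂ ⟪maxEntangled ι, tprodVec u₁ v₁⟫_ℂ
  have h₀ := norm_inner_maxEntangled_tprodVec_le u₀ v₀
  have h₁ := norm_inner_maxEntangled_tprodVec_le u₁ v₁
  rw [inner_add_right]
  set x₀ := tprodVec u₀ v₀
  set x₁ := tprodVec u₁ v₁
  nlinarith [norm_nonneg ⟪maxEntangled ι, x₀⟫_ℂ, norm_nonneg ⟪maxEntangled ι, x₁⟫_ℂ,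
    norm_nonneg (⟪maxEntangled ι, x₀⟫_ℂ + ⟪maxEntangled ι, x₁⟫_ℂ), sq_nonneg (‖x₀‖ - ‖x₁‖)]

lemma sq_norm_inner_maxEntangled_tprodVec_add_le (u₀ u₁ v₀ v₁ : EuclideanSpace ℂ ι) :
    ‖⟪maxEntangled ι, tprodVec u₀ v₀ + tprodVec u₁ v₁⟫_ℂ‖ ^ 2 ≤
      2 * ‖tprodVec u₀ v₀ + tprodVec u₁ v₁‖ ^ 2 := by
  -- One Gram–Schmidt step; for `u₀ = 0` the junk value `α = 0 / 0 = 0` is harmless.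
  set α := ⟪u₀, u₁⟫_ℂ / ⟪u₀, u₀⟫_ℂ
  have horth : ⟪u₀, u₁ - α • u₀⟫_ℂ = 0 := by
    rcases eq_or_ne u₀ 0 with rfl | hu₀
    · exact inner_zero_left _
    · rw [inner_sub_right, inner_smul_right, div_mul_cancel₀ _ (inner_self_ne_zero.mpr hu₀),
        sub_self]
  have hshift : tprodVec u₀ v₀ + tprodVec u₁ v₁ =
      tprodVec u₀ (v₀ + α • v₁) + tprodVec (u₁ - α • u₀) v₁ := by
    ext p
    simp only [PiLp.add_apply, tprodVec_apply, PiLp.smul_apply, PiLp.sub_apply, smul_eq_mul]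
    ring
  rw [hshift]
  exact sq_norm_inner_maxEntangled_tprodVec_add_le_of_inner_eq_zero horth _ _

def bellPair (i j : ι) : EuclideanSpace ℂ (ι × ι) :=
  tprodVec (EuclideanSpace.single i 1) (EuclideanSpace.single i (((√2)⁻¹ : ℝ) : ℂ)) +
    tprodVec (EuclideanSpace.single j 1) (EuclideanSpace.single j (((√2)⁻¹ : ℝ) : ℂ))

lemma norm_bellPair {i j : ι} (hij : i ≠ j) : ‖bellPair i j‖ = 1 := by
  have horth : ⟪tprodVec (EuclideanSpace.single i 1) (EuclideanSpace.single i (((√2)⁻¹ : ℝ) : ℂ)),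
      tprodVec (EuclideanSpace.single j 1) (EuclideanSpace.single j (((√2)⁻¹ : ℝ) : ℂ))⟫_ℂ = 0 := by
    simp [inner_tprodVec, EuclideanSpace.inner_single_left, hij.symm]
  have hpyth := norm_add_sq_eq_norm_sq_add_norm_sq_of_inner_eq_zero _ _ horth
  simp only [norm_tprodVec, PiLp.norm_single, norm_one, one_mul, Complex.norm_real,
    Real.norm_eq_abs, ← sq, sq_abs, inv_pow, Real.sq_sqrt zero_le_two] at hpyth
  rw [← pow_eq_one_iff_of_nonneg (norm_nonneg _) two_ne_zero, bellPair, hpyth]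
  norm_num

lemma sq_norm_inner_maxEntangled_bellPair (i j : ι) :
    ‖⟪maxEntangled ι, bellPair i j⟫_ℂ‖ ^ 2 = 2 := by
  have hdiag : ⟪maxEntangled ι, bellPair i j⟫_ℂ = ((2 * (√2)⁻¹ : ℝ) : ℂ) := by
    simp [bellPair, inner_maxEntangled]
    ring
  rw [hdiag, Complex.norm_real, Real.norm_eq_abs, sq_abs, mul_pow, inv_pow,
    Real.sq_sqrt zero_le_two]
  norm_num

end MaxEntangled

lemma re_star_dotProduct_smul_one_add_smul_vecMulVec_mulVec {n : Type*} [Fintype n]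
    [DecidableEq n] (c β : ℝ) (φ ψ : n → ℂ) :
    (star ψ ⬝ᵥ (((c : ℂ) • (1 + (β : ℂ) • vecMulVec φ (star φ))) *ᵥ ψ)).re =
      c * (‖WithLp.toLp 2 ψ‖ ^ 2 + β * ‖⟪WithLp.toLp 2 φ, WithLp.toLp 2 ψ⟫_ℂ‖ ^ 2) := by
  have hφψ : star φ ⬝ᵥ ψ = ⟪WithLp.toLp 2 φ, WithLp.toLp 2 ψ⟫_ℂ := by
    rw [EuclideanSpace.inner_toLp_toLp, dotProduct_comm]
  have hψφ : star ψ ⬝ᵥ φ = conj ⟪WithLp.toLp 2 φ, WithLp.toLp 2 ψ⟫_ℂ := by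
    simp only [← hφψ, dotProduct, map_sum, map_mul, Pi.star_apply, RCLike.star_def,
      RCLike.conj_conj, mul_comm]
  have hψψ : star ψ ⬝ᵥ ψ = ((‖WithLp.toLp 2 ψ‖ ^ 2 : ℝ) : ℂ) := by
    have := inner_self_eq_norm_sq_to_K (𝕜 := ℂ) (WithLp.toLp 2 ψ : EuclideanSpace ℂ n)
    rw [EuclideanSpace.inner_toLp_toLp, dotProduct_comm] at this
    exact_mod_cast this
  simp only [smul_mulVec, add_mulVec, one_mulVec, vecMulVec_mulVec, op_smul_eq_smul,
    dotProduct_smul, dotProduct_add, hφψ, hψφ, hψψ, smul_eq_mul]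
  rw [mul_comm _ (conj _), Complex.conj_mul']
  norm_cast

lemma ptB_werner (d : ℕ) (β : ℝ) :
    ptB (werner d β) = ((1 / ((d : ℝ) ^ 2 + β * d) : ℝ) : ℂ) •
      (1 + (β : ℂ) • vecMulVec (maxEntangled (Fin d)).ofLp (star (maxEntangled (Fin d)).ofLp)) := by
  ext p q
  simp only [ptB, werner, swapOp, maxEntangled, Matrix.smul_apply, Matrix.add_apply,
    Matrix.one_apply, vecMulVec_apply, Pi.star_apply, Prod.ext_iff]
  by_cases h₁ : p.1 = p.2 <;> by_cases h₂ : q.1 = q.2 <;> simp [h₁, h₂, eq_comm]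

lemma re_star_dotProduct_ptB_werner_mulVec (d : ℕ) (β : ℝ) (ψ : Fin d × Fin d → ℂ) :
    (star ψ ⬝ᵥ (ptB (werner d β) *ᵥ ψ)).re = 1 / ((d : ℝ) ^ 2 + β * d) *
      (‖WithLp.toLp 2 ψ‖ ^ 2 + β * ‖⟪maxEntangled (Fin d), WithLp.toLp 2 ψ⟫_ℂ‖ ^ 2) := by
  rw [ptB_werner, re_star_dotProduct_smul_one_add_smul_vecMulVec_mulVec, WithLp.toLp_ofLp]

theorem werner_one_distillability_general (d : ℕ) (hd : 2 ≤ d) (β : ℝ)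
    (hβ1 : -1 ≤ β) :
    (β < -(1 / 2) → ∃ ψ : Fin d × Fin d → ℂ,
        (∃ a b : Fin 2 → Fin d → ℂ, ∀ p, ψ p = ∑ i, a i p.1 * b i p.2) ∧
        (∑ p, ‖ψ p‖ ^ 2 = 1) ∧
        (dotProduct (star ψ) ((ptB (werner d β)).mulVec ψ)).re < 0) ∧
    (-(1 / 2) ≤ β → ∀ ψ : Fin d × Fin d → ℂ,
        (∃ a b : Fin 2 → Fin d → ℂ, ∀ p, ψ p = ∑ i, a i p.1 * b i p.2) →
        (∑ p, ‖ψ p‖ ^ 2 = 1) →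
        0 ≤ (dotProduct (star ψ) ((ptB (werner d β)).mulVec ψ)).re) := by
  have hc : 0 < 1 / ((d : ℝ) ^ 2 + β * d) := by
    have : (2 : ℝ) ≤ d := by exact_mod_cast hd
    exact one_div_pos.mpr (by nlinarith)
  refine ⟨fun hβ => ?_, fun hβ ψ ⟨a, b, hab⟩ hψ => ?_⟩
  · let i : Fin d := ⟨0, by omega⟩
    let j : Fin d := ⟨1, by omega⟩
    have hij : i ≠ j := by simp [i, j, Fin.ext_iff]
    let a : Fin 2 → Fin d → ℂ := ![Pi.single i 1, Pi.single j 1]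
    let b : Fin 2 → Fin d → ℂ :=
      ![Pi.single i (((√2)⁻¹ : ℝ) : ℂ), Pi.single j (((√2)⁻¹ : ℝ) : ℂ)]
    let ψ : Fin d × Fin d → ℂ := fun p => ∑ k, a k p.1 * b k p.2
    have hbell : WithLp.toLp 2 ψ = bellPair i j := toLp_eq_tprodVec_add fun _ => rfl
    refine ⟨ψ, ⟨a, b, fun _ => rfl⟩, ?_, ?_⟩
    · rw [← EuclideanSpace.norm_sq_eq (WithLp.toLp 2 ψ), hbell, norm_bellPair hij, one_pow]
    · rw [re_star_dotProduct_ptB_werner_mulVec, hbell, norm_bellPair hij,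
        sq_norm_inner_maxEntangled_bellPair]
      nlinarith
  · have hnorm : ‖WithLp.toLp 2 ψ‖ ^ 2 = 1 := by rw [EuclideanSpace.norm_sq_eq, ← hψ]
    have hbound := sq_norm_inner_maxEntangled_tprodVec_add_le (WithLp.toLp 2 (a 0))
      (WithLp.toLp 2 (a 1)) (WithLp.toLp 2 (b 0)) (WithLp.toLp 2 (b 1))
    rw [← toLp_eq_tprodVec_add hab, hnorm] at hbound
    rw [re_star_dotProduct_ptB_werner_mulVec, hnorm]
    apply mul_nonneg hc.le
    nlinarith [sq_nonneg ‖⟪maxEntangled (Fin d), WithLp.toLp 2 ψ⟫_ℂ‖]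

/-- The Werner state is 1-distillable iff `β < −1/2`: for `β < −1/2` some
Schmidt-rank-2 unit vector has negative expectation on `ρ_β^{T_B}`, and for
`β ≥ −1/2` every Schmidt-rank-2 unit vector has nonnegative expectation. -/
theorem werner_one_distillability (d : ℕ) (hd : 2 ≤ d) (β : ℝ)
    (hβ1 : -1 ≤ β) (hβ2 : β ≤ 1) :
    (β < -(1 / 2) → ∃ ψ : Fin d × Fin d → ℂ,
        (∃ a b : Fin 2 → Fin d → ℂ, ∀ p, ψ p = ∑ i, a i p.1 * b i p.2) ∧
        (∑ p, ‖ψ p‖ ^ 2 = 1) ∧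
        (dotProduct (star ψ) ((ptB (werner d β)).mulVec ψ)).re < 0) ∧
    (-(1 / 2) ≤ β → ∀ ψ : Fin d × Fin d → ℂ,
        (∃ a b : Fin 2 → Fin d → ℂ, ∀ p, ψ p = ∑ i, a i p.1 * b i p.2) →
        (∑ p, ‖ψ p‖ ^ 2 = 1) →
        0 ≤ (dotProduct (star ψ) ((ptB (werner d β)).mulVec ψ)).re) :=
  werner_one_distillability_general d hd β hβ1
end
end
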